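/- arXiv:1603.01150 — 2 statements merged into one kernel-verified Lean document; each statement's English description precedes it below -/
import Mathlib

section
/- Let h be the rank Morse function on the Basilica cube complex K(G₀) (the rank of [f: X(G₀) → X(G)] is |E(G)|). For a 0-cube x = [f] with f: X(G₀) → X(G), a simple expansion neighbor [Δ_ε ∘ f] has rank h(x)+2 and a simple contraction neighbor [∇_R ∘ f] has rank h(x)−2; in particular h takes values in a fixed congruence class mod 2 on each connected component and extends to a Morse function on K(G₀). -/
/-- A finite directed multigraph. -/
structure MDigraph where
  V : Type
  E : Type
  [fV : Fintype V]
  [fE : Fintype E]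
  [dV : DecidableEq V]
  [dE : DecidableEq E]
  src : E → V
  tgt : E → V

attribute [instance] MDigraph.fV MDigraph.fE MDigraph.dV MDigraph.dE

/-- The Basilica simple expansion `G ◁ ε`: the edge `ε` (from `v` to `w`) is removed and
replaced by a new vertex `m` (represented by `none`), an edge `ε1 : v → m`,
a loop `ε2` at `m` and an edge `ε3 : m → w`. -/
def MDigraph.expand (G : MDigraph) (ε : G.E) : MDigraph where
  V := Option G.V
  E := {e : G.E // e ≠ ε} ⊕ Fin 3
  src := fun e => match e with
    | .inl e => some (G.src e.1)
    | .inr 0 => some (G.src ε)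
    | .inr 1 => none
    | .inr 2 => none
  tgt := fun e => match e with
    | .inl e => some (G.tgt e.1)
    | .inr 0 => none
    | .inr 1 => none
    | .inr 2 => some (G.tgt ε)


/-! ## Edge replacement systems and their limit spaces

We fix a replacement rule: a finite directed replacement graph `R` with two distinguished
boundary vertices `vι` (initial) and `vτ` (terminal). For a base graph `G`, addresses of
edges of iterated expansions are pairs `(e, l)` of an edge of `G` and a word in `E(R)`;
the limit space is the quotient of the space of infinite addresses by the gluing relation
"all finite truncations share a vertex". -/

section ReplacementSystem

variable (R : MDigraph)

/-- Vertices of iterated expansions of `G`: either an original vertex of `G`, or the copy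
of an interior vertex of `R` sitting inside the cell with a given finite address. -/
def Vert (G : MDigraph) : Type := G.V ⊕ (G.E × List R.E × R.V)

variable (vι vτ : R.V)

/-- The pair of endpoints of the edge with address `(e, l)` in the iterated expansion,
computed recursively: the boundary vertices `vι, vτ` of a replacement cell resolve to the
endpoints of the replaced edge. -/
def ends (G : MDigraph) (e : G.E) (l : List R.E) : Vert R G × Vert R G :=
  (l.foldl
    (fun acc k =>
      letI res : R.V → Vert R G := fun u =>
        if u = vι then acc.1.1 else if u = vτ then acc.1.2 else Sum.inr (e, acc.2, u)
      ((res (R.src k), res (R.tgt k)), acc.2 ++ [k]))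
    ((Sum.inl (G.src e), Sum.inl (G.tgt e)), ([] : List R.E))).1

/-- The space of infinite addresses: a starting edge of the base graph and an infinite
word of replacement edges. -/
def Omega (G : MDigraph) : Type := G.E × (ℕ → R.E)

/-- The list of the first `n` letters of an infinite word. -/
def prefixList {G : MDigraph} (x : Omega R G) (n : ℕ) : List R.E :=
  List.ofFn (fun i : Fin n => x.2 i)

/-- Two pairs of endpoints share a vertex. -/
def SharesVertex {G : MDigraph} (p q : Vert R G × Vert R G) : Prop :=
  p.1 = q.1 ∨ p.1 = q.2 ∨ p.2 = q.1 ∨ p.2 = q.2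

/-- The gluing relation: all finite truncations of the two infinite addresses are edges
sharing a vertex. -/
def glueRel (G : MDigraph) (x y : Omega R G) : Prop :=
  ∀ n : ℕ, SharesVertex R (ends R vι vτ G x.1 (prefixList R x n))
    (ends R vι vτ G y.1 (prefixList R y n))

/-- The space of infinite addresses carries the product topology (the edge sets being
discrete). -/
instance (G : MDigraph) : TopologicalSpace (Omega R G) :=
  @instTopologicalSpaceProd _ _ ⊥ (@Pi.topologicalSpace _ _ (fun _ => ⊥))

/-- The setoid generated by the gluing relation. -/
def limitSetoid (G : MDigraph) : Setoid (Omega R G) := Relation.EqvGen.setoid (glueRel R vι vτ G)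

/-- The limit space `X(G)` of the replacement system with base graph `G`. -/
def LimitSpace (G : MDigraph) : Type := Quotient (limitSetoid R vι vτ G)

instance (G : MDigraph) : TopologicalSpace (LimitSpace R vι vτ G) :=
  instTopologicalSpaceQuotient

/-- The point of the limit space with infinite address `x`. -/
def pt {G : MDigraph} (x : Omega R G) : LimitSpace R vι vτ G :=
  Quotient.mk (limitSetoid R vι vτ G) x

/-- Prepend a finite word to an infinite word. -/
def prepend (l : List R.E) (s : ℕ → R.E) : ℕ → R.E :=
  fun n => if h : n < l.length then l.get ⟨n, h⟩ else s (n - l.length)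

/-- A finite address; it determines the cell `C(e, l)` of the limit space, consisting of
the points `pt (e, prepend l s)`. -/
def Addr (G : MDigraph) : Type := G.E × List R.E

/-- `a` is a prefix of the infinite address `x` (so `x` lies in the cell of `a`). -/
def AddrPrefix {G : MDigraph} (a : Addr R G) (x : Omega R G) : Prop :=
  a.1 = x.1 ∧ prefixList R x a.2.length = a.2

/-- Two cells have disjoint interiors iff neither address is a prefix of the other. -/
def AddrIndep {G : MDigraph} (a b : Addr R G) : Prop :=
  ¬ (a.1 = b.1 ∧ a.2 <+: b.2) ∧ ¬ (a.1 = b.1 ∧ b.2 <+: a.2)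

/-- `f` is a *rearrangement* `X(G) → X(G')`: there is a finite family of cells of `X(G)`
covering `X(G)`, with pairwise disjoint interiors, on each of which `f` is the canonical
(prefix replacement) homeomorphism onto a cell of `X(G')`, the target cells likewise
covering `X(G')` with pairwise disjoint interiors. -/
def IsRearr {G G' : MDigraph} (f : LimitSpace R vι vτ G ≃ₜ LimitSpace R vι vτ G') : Prop :=
  ∃ l : List (Addr R G × Addr R G'),
    l.Pairwise (fun p q => AddrIndep R p.1 q.1) ∧
    l.Pairwise (fun p q => AddrIndep R p.2 q.2) ∧
    (∀ x : Omega R G, ∃ p ∈ l, AddrPrefix R p.1 x) ∧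
    (∀ y : Omega R G', ∃ p ∈ l, AddrPrefix R p.2 y) ∧
    (∀ p ∈ l, ∀ s : ℕ → R.E,
      f (pt R vι vτ (p.1.1, prepend R p.1.2 s)) = pt R vι vτ (p.2.1, prepend R p.2.2 s))

/-- `f` is an *expansion rearrangement* `X(G) → X(G')`: `G'` is (identified with) an
expansion of `G`, whose edges correspond to a complete antichain of addresses of `G`, and
`f` is the canonical homeomorphism. -/
def IsExpansionRearr {G G' : MDigraph}
    (f : LimitSpace R vι vτ G ≃ₜ LimitSpace R vι vτ G') : Prop :=
  ∃ l : List (Addr R G × G'.E),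
    l.Pairwise (fun p q => AddrIndep R p.1 q.1) ∧
    (∀ x : Omega R G, ∃ p ∈ l, AddrPrefix R p.1 x) ∧
    (l.map Prod.snd).Nodup ∧ (∀ e' : G'.E, e' ∈ l.map Prod.snd) ∧
    (∀ p ∈ l, ∀ s : ℕ → R.E,
      f (pt R vι vτ (p.1.1, prepend R p.1.2 s)) = pt R vι vτ (p.2, s))

/-- `f` is a *base isomorphism*: the rearrangement induced by an isomorphism of base
graphs. -/
def IsBaseIso {G G' : MDigraph}
    (f : LimitSpace R vι vτ G ≃ₜ LimitSpace R vι vτ G') : Prop :=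
  ∃ (φV : G.V ≃ G'.V) (φE : G.E ≃ G'.E),
    (∀ e, G'.src (φE e) = φV (G.src e)) ∧ (∀ e, G'.tgt (φE e) = φV (G.tgt e)) ∧
    (∀ (e : G.E) (s : ℕ → R.E), f (pt R vι vτ (e, s)) = pt R vι vτ (φE e, s))

/-- `f` is a *contraction rearrangement*: the inverse of an expansion rearrangement. -/
def IsContractionRearr {G G' : MDigraph}
    (f : LimitSpace R vι vτ G ≃ₜ LimitSpace R vι vτ G') : Prop :=
  IsExpansionRearr R vι vτ f.symm

end ReplacementSystem

/-! ## The Basilica replacement system -/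

/-- The Basilica replacement graph `R`: vertices `0 = v` (initial), `1 = w` (terminal),
`2 = m` (the new interior vertex); edges `ε1 : v → m`, `ε2 : m → m` (a loop),
`ε3 : m → w`. -/
def BasilicaR : MDigraph where
  V := Fin 3
  E := Fin 3
  src := ![0, 2, 2]
  tgt := ![2, 2, 1]

/-- The Basilica base graph `G₀`: two vertices `x = 0, y = 1`, a loop `a` at `x`, an edge
`b : x → y`, a loop `c` at `y` and an edge `d : y → x`. -/
def BasilicaBase : MDigraph where
  V := Fin 2
  E := Fin 4
  src := ![0, 0, 1, 1]
  tgt := ![0, 1, 1, 0]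

/-- The initial and terminal boundary vertices of the Basilica replacement graph. -/
def bvι : BasilicaR.V := show Fin 3 from 0
def bvτ : BasilicaR.V := show Fin 3 from 1

/-- The limit space of the Basilica replacement system over a base graph `G`. -/
abbrev BLimit (G : MDigraph) : Type := LimitSpace BasilicaR bvι bvτ G

/-- Rearrangements for the Basilica replacement system. -/
abbrev BIsRearr {G G' : MDigraph} (f : BLimit G ≃ₜ BLimit G') : Prop :=
  IsRearr BasilicaR bvι bvτ f

/-! ## The cube complex `K(G₀)` of the Basilica replacement system -/

/-- A small model for finite directed graphs (so that they form a small type). -/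
def SkG : Type := Σ n m : ℕ, (Fin m → Fin n) × (Fin m → Fin n)

/-- The graph associated to a small model. -/
def toG (H : SkG) : MDigraph where
  V := Fin H.1
  E := Fin H.2.1
  src := H.2.2.1
  tgt := H.2.2.2

/-- A rearrangement with domain `X(B)` (and small range graph). -/
structure RearrFrom (B : MDigraph) where
  H : SkG
  f : BLimit B ≃ₜ BLimit (toG H)
  hf : BIsRearr f

/-- Range equivalence: two rearrangements with domain `X(B)` differ by a base
isomorphism. -/
def RangeEquiv (B : MDigraph) (x y : RearrFrom B) : Prop :=
  ∃ g : BLimit (toG x.H) ≃ₜ BLimit (toG y.H),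
    IsBaseIso BasilicaR bvι bvτ g ∧ y.f = x.f.trans g

/-- The `0`-cubes of the cube complex `K(B)`: range equivalence classes of rearrangements
with domain `X(B)`. -/
def K0 (B : MDigraph) : Type := Quot (RangeEquiv B)

/-- `l` witnesses that `f : X(G) → X(G')` is the expansion rearrangement obtained by
expanding exactly the edges in `S` once: the cells of the (possibly iterated) expansion
are the unexpanded edges `(e, [])` for `e ∉ S` and the thirds `(e, [k])` for `e ∈ S`, and
they correspond bijectively to the edges of `G'`, `f` being the canonical map. -/
def ExpAtSetWitness {G G' : MDigraph} (f : BLimit G ≃ₜ BLimit G') (S : Finset G.E)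
    (l : List (Addr BasilicaR G × G'.E)) : Prop :=
  (∀ p ∈ l, (p.1.1 ∉ S ∧ p.1.2 = []) ∨ (p.1.1 ∈ S ∧ ∃ k : Fin 3, p.1.2 = [(k : BasilicaR.E)])) ∧
  (∀ e : G.E, e ∉ S → ((e, ([] : List BasilicaR.E)) ∈ l.map Prod.fst)) ∧
  (∀ e ∈ S, ∀ k : Fin 3, ((e, [(k : BasilicaR.E)]) ∈ l.map Prod.fst)) ∧
  (l.map Prod.fst).Nodup ∧ (l.map Prod.snd).Nodup ∧ (∀ e' : G'.E, e' ∈ l.map Prod.snd) ∧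
  (∀ p ∈ l, ∀ s : ℕ → BasilicaR.E,
    f (pt BasilicaR bvι bvτ (p.1.1, prepend BasilicaR p.1.2 s)) = pt BasilicaR bvι bvτ (p.2, s))

/-- `f` is the simple expansion rearrangement `Δ_ε` at the edge `ε`. -/
def IsSimpleExpRearrAt {G G' : MDigraph} (f : BLimit G ≃ₜ BLimit G') (ε : G.E) : Prop :=
  ∃ l, ExpAtSetWitness f {ε} l

/-- `f` is the simple contraction rearrangement `∇` collapsing the replacement-shaped
subgraph with edges `t 0, t 1, t 2` (in the roles `ε1, ε2, ε3`) to a single edge. -/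
def IsSimpleContrOf {G G' : MDigraph} (f : BLimit G ≃ₜ BLimit G') (t : Fin 3 → G.E) : Prop :=
  ∃ (ε' : G'.E) (l : List (Addr BasilicaR G' × G.E)),
    ExpAtSetWitness f.symm {ε'} l ∧
    ∀ k : Fin 3, ((ε', [(k : BasilicaR.E)]), t k) ∈ l

/-- Two `0`-cubes of `K(B)` span a (directed) `1`-cube: the second is a simple expansion
of the first. -/
def ExpAdj (B : MDigraph) (p q : K0 B) : Prop :=
  ∃ (x y : RearrFrom B) (φ : BLimit (toG x.H) ≃ₜ BLimit (toG y.H)) (ε : (toG x.H).E),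
    IsSimpleExpRearrAt φ ε ∧ y.f = x.f.trans φ ∧
    p = Quot.mk _ x ∧ q = Quot.mk _ y

/-- `a, b, a', b'` are the corners of a `2`-cube of `K(B)`: `b` is the simple expansion of
`a` at `ε`, `a'` at `δ`, and `b'` is the double expansion at `{ε, δ}`. -/
def IsSquareK (B : MDigraph) (a b a' b' : K0 B) : Prop :=
  ∃ (x : RearrFrom B) (ε δ : (toG x.H).E), ε ≠ δ ∧ a = Quot.mk _ x ∧
    (∃ (y : RearrFrom B) (φ : BLimit (toG x.H) ≃ₜ BLimit (toG y.H)),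
      IsSimpleExpRearrAt φ ε ∧ y.f = x.f.trans φ ∧ b = Quot.mk _ y) ∧
    (∃ (z : RearrFrom B) (ψ : BLimit (toG x.H) ≃ₜ BLimit (toG z.H)),
      IsSimpleExpRearrAt ψ δ ∧ z.f = x.f.trans ψ ∧ a' = Quot.mk _ z) ∧
    (∃ (w : RearrFrom B) (χ : BLimit (toG x.H) ≃ₜ BLimit (toG w.H)) (lw : List _),
      ExpAtSetWitness χ {ε, δ} lw ∧ w.f = x.f.trans χ ∧ b' = Quot.mk _ w)

/-- Elementary parallelism: two (directed) `1`-cubes of `K(B)` are opposite sides of a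
common `2`-cube. -/
def ParaStep (B : MDigraph) (c d : K0 B × K0 B) : Prop :=
  ∃ a b a' b', IsSquareK B a b a' b' ∧
    ((c = (a, b) ∧ d = (a', b')) ∨ (c = (a, a') ∧ d = (b, b')))

/-- The wall dual to the `1`-cube `c`: all `1`-cubes parallel to `c`. -/
def WallOf (B : MDigraph) (c : K0 B × K0 B) : Set (K0 B × K0 B) :=
  {d | Relation.EqvGen (ParaStep B) c d}

/-- The class `z` has rank `r`: some (hence any) representative has a range graph with
`r` edges. -/
def HasRank {B : MDigraph} (z : K0 B) (r : ℕ) : Prop :=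
  ∃ w : RearrFrom B, Quot.mk _ w = z ∧ Fintype.card (toG w.H).E = r

/-- Two graphs are neighbors if there is a simple expansion or simple contraction
rearrangement between their Basilica limit spaces (i.e. the corresponding `0`-cubes of
`K(G₀)` are adjacent). -/
def GraphNbr (G G' : MDigraph) : Prop :=
  ∃ f : BLimit G ≃ₜ BLimit G',
    (∃ ε : G.E, IsSimpleExpRearrAt f ε) ∨ (∃ ε' : G'.E, IsSimpleExpRearrAt f.symm ε')

instance instDecEqAddr (R G : MDigraph) : DecidableEq (Addr R G) :=
  inferInstanceAs (DecidableEq (G.E × List R.E))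

lemma expCard {G G' : MDigraph} (f : BLimit G ≃ₜ BLimit G') (ε : G.E)
    (h : IsSimpleExpRearrAt f ε) : Fintype.card G'.E = Fintype.card G.E + 2 := by
  obtain ⟨l, h1, h2, h3, h4, h5, h6, _⟩ := h
  -- length of l equals card G'.E
  have hlen' : (l.map Prod.snd).toFinset.card = l.length := by
    rw [List.toFinset_card_of_nodup h5, List.length_map]
  have huniv' : (l.map Prod.snd).toFinset = Finset.univ := by
    apply Finset.eq_univ_iff_forall.mpr
    intro e'
    exact List.mem_toFinset.mpr (h6 e')
  have hcard' : Fintype.card G'.E = l.length := by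
    rw [← hlen', huniv', Finset.card_univ]
  -- the finset of first components
  set F : Finset (Addr BasilicaR G) :=
    ((Finset.univ.erase ε).image (fun e => (e, ([] : List BasilicaR.E)))) ∪
    (Finset.univ.image (fun k : Fin 3 => (ε, [(k : BasilicaR.E)]))) with hF
  have hfst : (l.map Prod.fst).toFinset = F := by
    ext p
    rw [List.mem_toFinset, hF]
    erw [Finset.mem_union, Finset.mem_image, Finset.mem_image]
    simp only [List.mem_map, Finset.mem_erase, Finset.mem_univ, and_true, true_and]
    constructor
    · rintro ⟨q, hq, rfl⟩
      rcases h1 q hq with ⟨hne, hnil⟩ | ⟨hmem, k, hk⟩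
      · left
        exact ⟨q.1.1, by simpa using hne, by rw [← hnil]; exact Prod.mk.eta⟩
      · right
        refine ⟨k, ?_⟩
        have : q.1.1 = ε := by simpa using hmem
        exact Prod.ext this.symm hk.symm
    · rintro (⟨e, he, rfl⟩ | ⟨k, rfl⟩)
      · have := h2 e (by simpa using he)
        exact List.mem_map.mp this
      · have := h3 ε (by simp) k
        exact List.mem_map.mp this
  have hlen : F.card = l.length := by
    rw [← hfst, List.toFinset_card_of_nodup h4, List.length_map]
  -- compute card F
  have hdisj : Disjoint ((Finset.univ.erase ε).image (fun e => (e, ([] : List BasilicaR.E))))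
      (Finset.univ.image (fun k : Fin 3 => (ε, [(k : BasilicaR.E)]))) := by
    rw [Finset.disjoint_left]
    rintro p hp hp'
    simp only [Finset.mem_image] at hp hp'
    obtain ⟨e, _, rfl⟩ := hp
    obtain ⟨k, _, hk⟩ := hp'
    have := congrArg Prod.snd hk
    simp at this
  have hc1 : ((Finset.univ.erase ε).image
      (fun e => (e, ([] : List BasilicaR.E)))).card = Fintype.card G.E - 1 := by
    rw [Finset.card_image_of_injective _ (fun a b hab => congrArg Prod.fst hab),
      Finset.card_erase_of_mem (Finset.mem_univ ε), Finset.card_univ]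
  have hc2 : ((Finset.univ : Finset (Fin 3)).image
      (fun k : Fin 3 => (ε, [(k : BasilicaR.E)]))).card = 3 := by
    rw [Finset.card_image_of_injective, Finset.card_univ, Fintype.card_fin]
    intro a b hab
    have : [(a : BasilicaR.E)] = [(b : BasilicaR.E)] := congrArg Prod.snd hab
    exact List.head_eq_of_cons_eq this
  have hFcard : F.card = Fintype.card G.E - 1 + 3 := by
    exact (Finset.card_union_of_disjoint hdisj).trans (congrArg₂ (· + ·) hc1 hc2)
  have hpos : 0 < Fintype.card G.E := Fintype.card_pos_iff.mpr ⟨ε⟩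
  omega

/-- The rank (number of edges of the range graph) behaves as follows under the rank Morse
function of the Basilica cube complex `K(G₀)`: a simple expansion neighbor `[Δ_ε ∘ f]` has
rank `h(x) + 2`, a simple contraction neighbor `[∇_R ∘ f]` has rank `h(x) − 2`; hence the
rank takes values in a fixed congruence class mod `2` on each connected component, and
(being non-constant on `1`-cubes, with discrete — indeed integral — values) it extends to
a Morse function on `K(G₀)`. -/
theorem basilica_rank_morse :
    (∀ (G G' : MDigraph) (f : BLimit G ≃ₜ BLimit G') (ε : G.E),
      IsSimpleExpRearrAt f ε → Fintype.card G'.E = Fintype.card G.E + 2) ∧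
    (∀ (G G' : MDigraph) (f : BLimit G ≃ₜ BLimit G') (ε' : G'.E),
      IsSimpleExpRearrAt f.symm ε' → Fintype.card G'.E + 2 = Fintype.card G.E) ∧
    (∀ G G' : MDigraph, Relation.ReflTransGen GraphNbr G G' →
      Fintype.card G.E ≡ Fintype.card G'.E [MOD 2]) ∧
    (∀ G G' : MDigraph, GraphNbr G G' → Fintype.card G.E ≠ Fintype.card G'.E) := by
  have key : ∀ (G G' : MDigraph), GraphNbr G G' →
      Fintype.card G'.E = Fintype.card G.E + 2 ∨
      Fintype.card G.E = Fintype.card G'.E + 2 := by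
    rintro G G' ⟨f, ⟨ε, hε⟩ | ⟨ε', hε'⟩⟩
    · exact Or.inl (expCard f ε hε)
    · exact Or.inr (expCard f.symm ε' hε')
  refine ⟨fun G G' f ε h => expCard f ε h,
    fun G G' f ε' h => (expCard f.symm ε' h).symm, ?_, ?_⟩
  · intro G G' h
    induction h with
    | refl => rfl
    | tail _ hnbr ih =>
      refine ih.trans ?_
      rcases key _ _ hnbr with h | h <;> (unfold Nat.ModEq; omega)
  · intro G G' h
    rcases key _ _ h with h | h <;> omega
end

section
/- In the cube complex K(G₀) for the Basilica replacement system with G₀ the standard base graph, fix n ∈ ℕ and a vertex [fₙ] with range graph Jₙ (the chain of n+1 bigons with loop-decorated triangles at both ends). Let H₁, H₂ be the walls dual to the 1-cubes from [fₙ] to [∇_{x,y,z}∘fₙ] and from [fₙ] to [∇_{c,d,e}∘fₙ]. Then the four vertices [∇_{a,b,c}∘∇_{v,w,x}∘fₙ], [∇_{c,d,e}∘∇_{v,w,x}∘fₙ], [∇_{a,b,c}∘∇_{x,y,z}∘fₙ], [∇_{c,d,e}∘∇_{x,y,z}∘fₙ] have rank 2n+6 and lie, respectively, in the four quarter-spaces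 H₁⁺∩H₂⁺, H₁⁺∩H₂⁻, H₁⁻∩H₂⁺, H₁⁻∩H₂⁻ intersected with the sublevel set Y_n = K(G₀)_{2n+9}; in particular all four quarter-space intersections with Y_n are nonempty. -/
/-- Adjacency in the `1`-skeleton of `K(B)` avoiding the `1`-cubes of a given wall. -/
def AdjOff (B : MDigraph) (Wset : Set (K0 B × K0 B)) (p q : K0 B) : Prop :=
  (ExpAdj B p q ∨ ExpAdj B q p) ∧ (p, q) ∉ Wset ∧ (q, p) ∉ Wset

/-- `z` lies in the half-space determined by the wall `Wset` containing `base`: it is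
connected to `base` in the `1`-skeleton without crossing the wall. -/
def SideOf (B : MDigraph) (Wset : Set (K0 B × K0 B)) (base z : K0 B) : Prop :=
  Relation.ReflTransGen (AdjOff B Wset) base z

/-- The graph `Jₙ` (as a small graph): a chain of vertices `0, …, n` joined by `n` bigons
(edges `< 2n`), a left pendant consisting of vertices `p = n+1`, `q = n+2` and edges
`v = 2n : 0 → p`, `w = 2n+1 :` loop at `p`, `x = 2n+2 : p → q`, `y = 2n+3 :` loop at `q`,
`z = 2n+4 : q → 0`, and a right pendant consisting of vertices `l = n+3`, `m = n+4` and
edges `a = 2n+5 : n → l`, `b = 2n+6 :` loop at `l`, `c = 2n+7 : l → m`, `d = 2n+8 :` loop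
at `m`, `e = 2n+9 : m → n`. It has `n+5` vertices and `2n+10` edges. -/
def Jn (n : ℕ) : SkG :=
  ⟨n + 5, 2 * n + 10,
   fun e =>
    if h : e.1 < 2 * n then
      (if e.1 % 2 = 0 then ⟨e.1 / 2, by omega⟩ else ⟨e.1 / 2 + 1, by omega⟩)
    else if e.1 = 2 * n then ⟨0, by omega⟩
    else if e.1 = 2 * n + 1 then ⟨n + 1, by omega⟩
    else if e.1 = 2 * n + 2 then ⟨n + 1, by omega⟩
    else if e.1 = 2 * n + 3 then ⟨n + 2, by omega⟩
    else if e.1 = 2 * n + 4 then ⟨n + 2, by omega⟩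
    else if e.1 = 2 * n + 5 then ⟨n, by omega⟩
    else if e.1 = 2 * n + 6 then ⟨n + 3, by omega⟩
    else if e.1 = 2 * n + 7 then ⟨n + 3, by omega⟩
    else if e.1 = 2 * n + 8 then ⟨n + 4, by omega⟩
    else ⟨n + 4, by omega⟩,
   fun e =>
    if h : e.1 < 2 * n then
      (if e.1 % 2 = 0 then ⟨e.1 / 2 + 1, by omega⟩ else ⟨e.1 / 2, by omega⟩)
    else if e.1 = 2 * n then ⟨n + 1, by omega⟩
    else if e.1 = 2 * n + 1 then ⟨n + 1, by omega⟩
    else if e.1 = 2 * n + 2 then ⟨n + 2, by omega⟩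
    else if e.1 = 2 * n + 3 then ⟨n + 2, by omega⟩
    else if e.1 = 2 * n + 4 then ⟨0, by omega⟩
    else if e.1 = 2 * n + 5 then ⟨n + 3, by omega⟩
    else if e.1 = 2 * n + 6 then ⟨n + 3, by omega⟩
    else if e.1 = 2 * n + 7 then ⟨n + 4, by omega⟩
    else if e.1 = 2 * n + 8 then ⟨n + 4, by omega⟩
    else ⟨n, by omega⟩⟩

/-- The labeled edges of `Jₙ`. -/
def JvE (n : ℕ) : (toG (Jn n)).E := Fin.mk (2 * n) (by show 2 * n < 2 * n + 10; omega)
def JwE (n : ℕ) : (toG (Jn n)).E := Fin.mk (2 * n + 1) (by show 2 * n + 1 < 2 * n + 10; omega)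
def JxE (n : ℕ) : (toG (Jn n)).E := Fin.mk (2 * n + 2) (by show 2 * n + 2 < 2 * n + 10; omega)
def JyE (n : ℕ) : (toG (Jn n)).E := Fin.mk (2 * n + 3) (by show 2 * n + 3 < 2 * n + 10; omega)
def JzE (n : ℕ) : (toG (Jn n)).E := Fin.mk (2 * n + 4) (by show 2 * n + 4 < 2 * n + 10; omega)
def JaE (n : ℕ) : (toG (Jn n)).E := Fin.mk (2 * n + 5) (by show 2 * n + 5 < 2 * n + 10; omega)
def JbE (n : ℕ) : (toG (Jn n)).E := Fin.mk (2 * n + 6) (by show 2 * n + 6 < 2 * n + 10; omega)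
def JcE (n : ℕ) : (toG (Jn n)).E := Fin.mk (2 * n + 7) (by show 2 * n + 7 < 2 * n + 10; omega)
def JdE (n : ℕ) : (toG (Jn n)).E := Fin.mk (2 * n + 8) (by show 2 * n + 8 < 2 * n + 10; omega)
def JeE (n : ℕ) : (toG (Jn n)).E := Fin.mk (2 * n + 9) (by show 2 * n + 9 < 2 * n + 10; omega)

/-! ## Auxiliary development -/

section QSAux

open Relation

/-! ### prepend lemmas -/

lemma prepend_nil (R : MDigraph) (s : ℕ → R.E) : prepend R [] s = s := by
  funext n; simp [prepend]

lemma prepend_append (R : MDigraph) (p q : List R.E) (s : ℕ → R.E) :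
    prepend R (p ++ q) s = prepend R p (prepend R q s) := by
  funext n
  simp only [prepend, List.length_append]
  by_cases h1 : n < p.length
  · rw [dif_pos (show n < p.length + q.length by omega), dif_pos h1]
    simp [List.getElem_append, h1]
  · by_cases h2 : n < p.length + q.length
    · rw [dif_pos h2, dif_neg h1, dif_pos (show n - p.length < q.length by omega)]
      simp only [List.get_eq_getElem]
      rw [List.getElem_append_right (by omega)]
    · rw [dif_neg h2, dif_neg h1, dif_neg (show ¬ n - p.length < q.length by omega)]
      congr 1; omega

lemma prepend_head_tail (R : MDigraph) (s : ℕ → R.E) :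
    prepend R [s 0] (fun n => s (n + 1)) = s := by
  funext n
  cases n with
  | zero => simp [prepend]
  | succ m => simp [prepend]

/-! ### list helpers -/

lemma mem_eq_of_map_nodup {α β : Type*} {l : List α} {f : α → β} (hn : (l.map f).Nodup)
    {a b : α} (ha : a ∈ l) (hb : b ∈ l) (h : f a = f b) : a = b := by
  induction l with
  | nil => cases ha
  | cons c l ih =>
    simp only [List.map_cons, List.nodup_cons, List.mem_map] at hn
    rcases List.mem_cons.1 ha with rfl | ha' <;> rcases List.mem_cons.1 hb with rfl | hb'
    · rfl
    · exact absurd ⟨b, hb', h.symm⟩ hn.1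
    · exact absurd ⟨a, ha', h⟩ hn.1
    · exact ih hn.2 ha' hb'

lemma fin3_cases : ∀ u : Fin 3, u = 0 ∨ u = 1 ∨ u = 2 := by decide


/-! ### `ends` computations for the Basilica system -/

/-- numeral helpers for the Basilica graph -/
def bE (k : Fin 3) : BasilicaR.E := k
def bV (k : Fin 3) : BasilicaR.V := k


def vres (G : MDigraph) (e : G.E)
    (acc : (Vert BasilicaR G × Vert BasilicaR G) × List BasilicaR.E) (u : BasilicaR.V) :
    Vert BasilicaR G :=
  if u = bvι then acc.1.1 else if u = bvτ then acc.1.2 else Sum.inr (e, acc.2, u)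

def bstep (G : MDigraph) (e : G.E) :
    ((Vert BasilicaR G × Vert BasilicaR G) × List BasilicaR.E) → BasilicaR.E →
      ((Vert BasilicaR G × Vert BasilicaR G) × List BasilicaR.E) :=
  fun acc k => ((vres G e acc (BasilicaR.src k), vres G e acc (BasilicaR.tgt k)), acc.2 ++ [k])

lemma ends_eq (G : MDigraph) (e : G.E) (l : List BasilicaR.E) :
    ends BasilicaR bvι bvτ G e l =
      (l.foldl (bstep G e) ((Sum.inl (G.src e), Sum.inl (G.tgt e)), [])).1 := rfl

lemma bfoldl_snd (G : MDigraph) (e : G.E) :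
    ∀ (l : List BasilicaR.E) acc, (l.foldl (bstep G e) acc).2 = acc.2 ++ l := by
  intro l
  induction l with
  | nil => intro acc; simp
  | cons k l ih => intro acc; rw [List.foldl_cons, ih]; simp [bstep]

def GoodPt {G : MDigraph} (e : G.E) (l : List BasilicaR.E) (P : Vert BasilicaR G) : Prop :=
  (∃ v, P = Sum.inl v) ∨ ∃ m, m < l.length ∧ P = Sum.inr (e, l.take m, bV 2)

lemma goodPt_mono {G : MDigraph} {e : G.E} {l : List BasilicaR.E} (k : BasilicaR.E)
    {P : Vert BasilicaR G} (h : GoodPt e l P) : GoodPt e (l ++ [k]) P := by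
  rcases h with ⟨v, hv⟩ | ⟨m, hm, hP⟩
  · exact Or.inl ⟨v, hv⟩
  · refine Or.inr ⟨m, by simp; omega, ?_⟩
    rw [hP, List.take_append_of_le_length (by omega)]

lemma ends_shape (G : MDigraph) (e : G.E) :
    ∀ l : List BasilicaR.E, GoodPt e l (ends BasilicaR bvι bvτ G e l).1 ∧
      GoodPt e l (ends BasilicaR bvι bvτ G e l).2 := by
  intro l
  induction l using List.reverseRecOn with
  | nil => exact ⟨Or.inl ⟨_, rfl⟩, Or.inl ⟨_, rfl⟩⟩
  | append_singleton l k ih =>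
    rw [ends_eq, List.foldl_append]
    set acc := l.foldl (bstep G e) ((Sum.inl (G.src e), Sum.inl (G.tgt e)), []) with hacc
    have hsnd : acc.2 = l := by rw [hacc, bfoldl_snd]; simp
    have h1 : acc.1.1 = (ends BasilicaR bvι bvτ G e l).1 := by rw [ends_eq]
    have h2 : acc.1.2 = (ends BasilicaR bvι bvτ G e l).2 := by rw [ends_eq]
    have key : ∀ u : BasilicaR.V, GoodPt e (l ++ [k]) (vres G e acc u) := by
      intro u
      rcases fin3_cases u with rfl | rfl | rfl
      · have : GoodPt e (l ++ [k]) acc.1.1 := by rw [h1]; exact goodPt_mono k ih.1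
        exact this
      · have : GoodPt e (l ++ [k]) acc.1.2 := by rw [h2]; exact goodPt_mono k ih.2
        exact this
      · have : GoodPt e (l ++ [k]) (Sum.inr (e, acc.2, bV 2) : Vert BasilicaR G) := by
          rw [hsnd]
          exact Or.inr ⟨l.length, by simp, by rw [List.take_left]⟩
        exact this
    exact ⟨key _, key _⟩

lemma ends_replicate_one (G : MDigraph) (e : G.E) (m : ℕ) :
    ends BasilicaR bvι bvτ G e (List.replicate (m + 1) (bE 1)) =
      (Sum.inr (e, List.replicate m (bE 1), bV 2),
       Sum.inr (e, List.replicate m (bE 1), bV 2)) := by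
  rw [List.replicate_succ', ends_eq, List.foldl_append]
  set acc := (List.replicate m (bE 1)).foldl (bstep G e)
      ((Sum.inl (G.src e), Sum.inl (G.tgt e)), []) with hacc
  have hsnd : acc.2 = List.replicate m (bE 1) := by rw [hacc, bfoldl_snd]; simp
  have hsrc : BasilicaR.src (bE 1) = bV 2 := rfl
  have htgt : BasilicaR.tgt (bE 1) = bV 2 := rfl
  simp only [List.foldl_cons, List.foldl_nil, bstep, hsrc, htgt]
  show ((Sum.inr (e, acc.2, bV 2) : Vert BasilicaR G), (Sum.inr (e, acc.2, bV 2) : Vert BasilicaR G)) = _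
  rw [hsnd]

lemma prefixList_length (R : MDigraph) {G : MDigraph} (x : Omega R G) (n : ℕ) :
    (prefixList R x n).length = n := by simp [prefixList]

lemma prefixList_const1 {G : MDigraph} (e : G.E) (n : ℕ) :
    prefixList BasilicaR ((e, fun _ => bE 1) : Omega BasilicaR G) n =
      List.replicate n (bE 1) := by
  unfold prefixList
  exact List.ofFn_const n (bE 1)

lemma prefixList_getElem (R : MDigraph) {G : MDigraph} (x : Omega R G) (n i : ℕ)
    (h : i < (prefixList R x n).length) : (prefixList R x n)[i] = x.2 i := by
  simp [prefixList]


/-! ### isolation of the all-`1` address -/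

lemma sharesVertex_symm {R G : MDigraph} {p q : Vert R G × Vert R G}
    (h : SharesVertex R p q) : SharesVertex R q p := by
  unfold SharesVertex at *
  rcases h with h | h | h | h
  · exact Or.inl h.symm
  · exact Or.inr (Or.inr (Or.inl h.symm))
  · exact Or.inr (Or.inl h.symm)
  · exact Or.inr (Or.inr (Or.inr h.symm))

lemma glueRel_symm {R : MDigraph} {vι vτ : R.V} {G : MDigraph} {x y : Omega R G}
    (h : glueRel R vι vτ G x y) : glueRel R vι vτ G y x :=
  fun n => sharesVertex_symm (h n)

lemma glue_const1 {G : MDigraph} {e : G.E} {z : Omega BasilicaR G}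
    (h : glueRel BasilicaR bvι bvτ G z (e, fun _ => bE 1)) : z = (e, fun _ => bE 1) := by
  have key : ∀ m : ℕ, z.1 = e ∧ z.2 m = bE 1 := by
    intro m
    have h2 := h (m + 2)
    rw [prefixList_const1, show m + 2 = (m + 1) + 1 from rfl, ends_replicate_one] at h2
    have hP : (ends BasilicaR bvι bvτ G z.1 (prefixList BasilicaR z (m + 2))).1 =
          Sum.inr (e, List.replicate (m + 1) (bE 1), bV 2) ∨
        (ends BasilicaR bvι bvτ G z.1 (prefixList BasilicaR z (m + 2))).2 =
          Sum.inr (e, List.replicate (m + 1) (bE 1), bV 2) := by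
      rcases h2 with h2 | h2 | h2 | h2
      · exact Or.inl h2
      · exact Or.inl h2
      · exact Or.inr h2
      · exact Or.inr h2
    obtain ⟨hs1, hs2⟩ := ends_shape G z.1 (prefixList BasilicaR z (m + 2))
    have main : ∀ P : Vert BasilicaR G, GoodPt z.1 (prefixList BasilicaR z (m + 2)) P →
        P = Sum.inr (e, List.replicate (m + 1) (bE 1), bV 2) → z.1 = e ∧ z.2 m = bE 1 := by
      rintro P (⟨v, rfl⟩ | ⟨m', hm', hP⟩) hPe
      · exact absurd hPe (by simp)
      · rw [hP] at hPe
        have h1 := Sum.inr_injective hPe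
        obtain ⟨he', h2⟩ := Prod.ext_iff.1 h1
        obtain ⟨htake, -⟩ := Prod.ext_iff.1 h2
        dsimp only at he' htake
        have hlen : m' = m + 1 := by
          have := congrArg List.length htake
          simp [List.length_take, prefixList_length] at this
          omega
        subst hlen
        have hget : (prefixList BasilicaR z (m + 2))[m]'(by rw [prefixList_length]; omega)
            = bE 1 := by
          have h0 : ((prefixList BasilicaR z (m + 2)).take (m + 1))[m]'(by
              simp [List.length_take, prefixList_length]) = bE 1 := by
            simp [htake]
          rw [List.getElem_take] at h0
          exact h0
        rw [prefixList_getElem] at hget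
        exact ⟨he', hget⟩
    rcases hP with hP | hP
    · exact main _ hs1 hP
    · exact main _ hs2 hP
  refine Prod.ext (key 0).1 (funext fun m => (key m).2)

lemma eqvGen_const1 {G : MDigraph} {e : G.E} {a b : Omega BasilicaR G}
    (h : EqvGen (glueRel BasilicaR bvι bvτ G) a b) :
    (a = (e, fun _ => bE 1)) ↔ (b = (e, fun _ => bE 1)) := by
  induction h with
  | rel x y hxy =>
    constructor
    · rintro rfl; exact glue_const1 (glueRel_symm hxy)
    · rintro rfl; exact glue_const1 hxy
  | refl x => exact Iff.rfl
  | symm x y _ ih => exact ih.symm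
  | trans x y z _ _ ih1 ih2 => exact ih1.trans ih2

lemma pt_const1_eq {G : MDigraph} {e : G.E} {z : Omega BasilicaR G}
    (h : pt BasilicaR bvι bvτ z = pt BasilicaR bvι bvτ ((e, fun _ => bE 1) : Omega BasilicaR G)) :
    z = (e, fun _ => bE 1) := by
  have hz : EqvGen (glueRel BasilicaR bvι bvτ G) z (e, fun _ => bE 1) := Quotient.exact h
  exact (eqvGen_const1 hz).2 rfl

/-! ### cells -/

def cellSet {G : MDigraph} (e : G.E) : Set (BLimit G) :=
  Set.range fun s => pt BasilicaR bvι bvτ (e, s)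

lemma pt_const1_mem_cellSet {G : MDigraph} (e : G.E) :
    pt BasilicaR bvι bvτ ((e, fun _ => bE 1) : Omega BasilicaR G) ∈ cellSet e :=
  ⟨fun _ => bE 1, rfl⟩

lemma eq_of_pt_const1_mem {G : MDigraph} {e e' : G.E}
    (h : pt BasilicaR bvι bvτ ((e, fun _ => bE 1) : Omega BasilicaR G) ∈ cellSet e') :
    e' = e := by
  obtain ⟨s, hs⟩ := h
  have := pt_const1_eq hs
  exact congrArg Prod.fst this

lemma image_subcell {G G' : MDigraph} (φ : BLimit G ≃ₜ BLimit G') (e : G.E)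
    (p : List BasilicaR.E) (e' : G'.E)
    (h : ∀ s, φ (pt BasilicaR bvι bvτ (e, prepend BasilicaR p s)) = pt BasilicaR bvι bvτ (e', s)) :
    φ '' (Set.range fun s => pt BasilicaR bvι bvτ (e, prepend BasilicaR p s)) = cellSet e' := by
  rw [← Set.range_comp]
  unfold cellSet
  exact congrArg Set.range (funext h)

lemma image_cell {G G' : MDigraph} (φ : BLimit G ≃ₜ BLimit G') (e : G.E) (e' : G'.E)
    (h : ∀ s, φ (pt BasilicaR bvι bvτ (e, s)) = pt BasilicaR bvι bvτ (e', s)) :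
    φ '' cellSet e = cellSet e' := by
  rw [cellSet, ← Set.range_comp]
  exact congrArg Set.range (funext h)

lemma symm_image_cell {G G' : MDigraph} (φ : BLimit G ≃ₜ BLimit G') (e : G.E) (e' : G'.E)
    (h : ∀ s, φ (pt BasilicaR bvι bvτ (e, s)) = pt BasilicaR bvι bvτ (e', s)) :
    φ.symm '' cellSet e' = cellSet e := by
  rw [← image_cell φ e e' h, ← Set.image_comp]
  simp [Set.image_id']

lemma cellSet_eq_union {G : MDigraph} (e : G.E) :
    cellSet e = (Set.range fun s => pt BasilicaR bvι bvτ (e, prepend BasilicaR [bE 0] s)) ∪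
      (Set.range fun s => pt BasilicaR bvι bvτ (e, prepend BasilicaR [bE 1] s)) ∪
      (Set.range fun s => pt BasilicaR bvι bvτ (e, prepend BasilicaR [bE 2] s)) := by
  apply Set.Subset.antisymm
  · rintro _ ⟨s, rfl⟩
    have hs : pt BasilicaR bvι bvτ (e, s) =
        pt BasilicaR bvι bvτ (e, prepend BasilicaR [s 0] (fun n => s (n + 1))) := by
      rw [prepend_head_tail]
    rcases fin3_cases (s 0) with h0 | h0 | h0
    · refine Or.inl (Or.inl ⟨fun n => s (n + 1), ?_⟩)
      show pt BasilicaR bvι bvτ (e, prepend BasilicaR [bE 0] fun n => s (n + 1)) =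
        pt BasilicaR bvι bvτ (e, s)
      rw [hs, show (bE 0) = s 0 from h0.symm]
    · refine Or.inl (Or.inr ⟨fun n => s (n + 1), ?_⟩)
      show pt BasilicaR bvι bvτ (e, prepend BasilicaR [bE 1] fun n => s (n + 1)) =
        pt BasilicaR bvι bvτ (e, s)
      rw [hs, show (bE 1) = s 0 from h0.symm]
    · refine Or.inr ⟨fun n => s (n + 1), ?_⟩
      show pt BasilicaR bvι bvτ (e, prepend BasilicaR [bE 2] fun n => s (n + 1)) =
        pt BasilicaR bvι bvτ (e, s)
      rw [hs, show (bE 2) = s 0 from h0.symm]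
  · rintro x ((⟨s, rfl⟩ | ⟨s, rfl⟩) | ⟨s, rfl⟩) <;> exact ⟨_, rfl⟩


/-! ### counting edges from an expansion witness -/

instance addrDecEq (R G : MDigraph) : DecidableEq (Addr R G) := by
  unfold Addr; infer_instance

lemma card_of_expWitness {G G' : MDigraph} {φ : BLimit G ≃ₜ BLimit G'} {ε : G.E}
    {l : List (Addr BasilicaR G × G'.E)} (h : ExpAtSetWitness φ {ε} l) :
    Fintype.card G'.E = Fintype.card G.E + 2 := by
  obtain ⟨h1, h2, h3, h4, h5, h6, h7⟩ := h
  have hlen1 : l.length = Fintype.card G'.E := by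
    have huniv : (l.map Prod.snd).toFinset = Finset.univ :=
      Finset.eq_univ_of_forall (fun x => List.mem_toFinset.2 (h6 x))
    calc l.length = (l.map Prod.snd).length := (List.length_map _).symm
      _ = (l.map Prod.snd).toFinset.card := (List.toFinset_card_of_nodup h5).symm
      _ = Fintype.card G'.E := by rw [huniv, Finset.card_univ]
  have hlen2 : l.length = (Fintype.card G.E - 1) + 3 := by
    set A : Finset (Addr BasilicaR G) :=
      (Finset.univ.erase ε).image (fun e : G.E => (e, ([] : List BasilicaR.E))) with hA
    set B : Finset (Addr BasilicaR G) :=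
      (Finset.univ : Finset (Fin 3)).image (fun k => (ε, [(k : BasilicaR.E)])) with hB
    have hset : (l.map Prod.fst).toFinset = A ∪ B := by
      apply Finset.Subset.antisymm
      · intro a ha
        rw [List.mem_toFinset, List.mem_map] at ha
        obtain ⟨p, hp, rfl⟩ := ha
        rcases h1 p hp with ⟨he, hp2⟩ | ⟨he, k, hp2⟩
        · apply Finset.mem_union_left
          refine Finset.mem_image.2 ⟨p.1.1, Finset.mem_erase.2 ⟨by simpa using he,
            Finset.mem_univ _⟩, ?_⟩
          exact Prod.ext rfl hp2.symm
        · apply Finset.mem_union_right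
          refine Finset.mem_image.2 ⟨k, Finset.mem_univ _, ?_⟩
          have he2 : p.1.1 = ε := by simpa using he
          exact Prod.ext he2.symm hp2.symm
      · intro a ha
        rw [List.mem_toFinset]
        rcases Finset.mem_union.1 ha with ha | ha
        · obtain ⟨e, he, rfl⟩ := Finset.mem_image.1 ha
          exact h2 e (by simpa using (Finset.mem_erase.1 he).1)
        · obtain ⟨k, -, rfl⟩ := Finset.mem_image.1 ha
          exact h3 ε (Finset.mem_singleton_self ε) k
    have hcardA : A.card = Fintype.card G.E - 1 := by
      rw [hA]
      refine (Finset.card_image_of_injective (f := fun e : G.E => (e, ([] : List BasilicaR.E)))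
        _ (fun a b hab => (Prod.ext_iff.1 hab).1)).trans ?_
      rw [Finset.card_erase_of_mem (Finset.mem_univ _), Finset.card_univ]
    have hinjB : Function.Injective
        (fun k : Fin 3 => ((ε, [(k : BasilicaR.E)]) : Addr BasilicaR G)) := by
      intro a b hab
      exact (List.cons.inj (Prod.ext_iff.1 hab).2).1
    have hcardB : B.card = 3 := by
      rw [hB]
      have hc := Finset.card_image_of_injective (Finset.univ : Finset (Fin 3)) hinjB
      rw [Finset.card_univ] at hc
      exact hc.trans (Fintype.card_fin 3)
    have hdisj : Disjoint A B := by
      rw [Finset.disjoint_left]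
      rintro a haA haB
      obtain ⟨e, -, rfl⟩ := Finset.mem_image.1 haA
      obtain ⟨k, -, hk⟩ := Finset.mem_image.1 haB
      exact absurd (Prod.ext_iff.1 hk).2 (by simp)
    calc l.length = (l.map Prod.fst).length := (List.length_map _).symm
      _ = (l.map Prod.fst).toFinset.card := (List.toFinset_card_of_nodup h4).symm
      _ = (A ∪ B).card := by rw [hset]
      _ = A.card + B.card := Finset.card_union_of_disjoint hdisj
      _ = (Fintype.card G.E - 1) + 3 := by rw [hcardA, hcardB]
  have hpos : 0 < Fintype.card G.E := Fintype.card_pos_iff.2 ⟨ε⟩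
  omega

/-! ### range equivalence is an equivalence; ranks -/

lemma isBaseIso_refl {G : MDigraph} : IsBaseIso BasilicaR bvι bvτ (Homeomorph.refl (BLimit G)) :=
  ⟨Equiv.refl _, Equiv.refl _, fun e => rfl, fun e => rfl, fun e s => rfl⟩

lemma isBaseIso_symm {G G' : MDigraph} {g : BLimit G ≃ₜ BLimit G'}
    (h : IsBaseIso BasilicaR bvι bvτ g) : IsBaseIso BasilicaR bvι bvτ g.symm := by
  obtain ⟨φV, φE, h1, h2, h3⟩ := h
  refine ⟨φV.symm, φE.symm, ?_, ?_, ?_⟩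
  · intro e
    have := h1 (φE.symm e)
    rw [Equiv.apply_symm_apply] at this
    rw [this, Equiv.symm_apply_apply]
  · intro e
    have := h2 (φE.symm e)
    rw [Equiv.apply_symm_apply] at this
    rw [this, Equiv.symm_apply_apply]
  · intro e s
    have := h3 (φE.symm e) s
    rw [Equiv.apply_symm_apply] at this
    rw [← this, Homeomorph.symm_apply_apply]

lemma isBaseIso_trans {G G' G'' : MDigraph} {g : BLimit G ≃ₜ BLimit G'}
    {g' : BLimit G' ≃ₜ BLimit G''} (h : IsBaseIso BasilicaR bvι bvτ g)
    (h' : IsBaseIso BasilicaR bvι bvτ g') : IsBaseIso BasilicaR bvι bvτ (g.trans g') := by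
  obtain ⟨φV, φE, h1, h2, h3⟩ := h
  obtain ⟨ψV, ψE, h1', h2', h3'⟩ := h'
  refine ⟨φV.trans ψV, φE.trans ψE, ?_, ?_, ?_⟩
  · intro e; simp [h1', h1]
  · intro e; simp [h2', h2]
  · intro e s; simp [Homeomorph.trans_apply, h3, h3']

lemma rangeEquiv_equivalence (B : MDigraph) : Equivalence (RangeEquiv B) := by
  constructor
  · intro x
    exact ⟨Homeomorph.refl _, isBaseIso_refl, Homeomorph.ext (fun z => by simp)⟩
  · rintro x y ⟨g, hg, hyf⟩
    refine ⟨g.symm, isBaseIso_symm hg, ?_⟩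
    rw [hyf]
    exact Homeomorph.ext (fun z => by simp)
  · rintro x y z ⟨g, hg, hyf⟩ ⟨g', hg', hzf⟩
    refine ⟨g.trans g', isBaseIso_trans hg hg', ?_⟩
    rw [hzf, hyf]
    exact Homeomorph.ext (fun w => by simp [Homeomorph.trans_apply])

lemma rangeEquiv_of_mk_eq {B : MDigraph} {x y : RearrFrom B}
    (h : Quot.mk (RangeEquiv B) x = Quot.mk (RangeEquiv B) y) : RangeEquiv B x y :=
  ((rangeEquiv_equivalence B).eqvGen_iff).1 (Quot.eq.1 h)

lemma hasRank_mk {B : MDigraph} (w : RearrFrom B) :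
    HasRank (Quot.mk (RangeEquiv B) w) (Fintype.card (toG w.H).E) := ⟨w, rfl, rfl⟩

lemma hasRank_unique {B : MDigraph} {z : K0 B} {r r' : ℕ}
    (h : HasRank z r) (h' : HasRank z r') : r = r' := by
  obtain ⟨w, hw, hc⟩ := h
  obtain ⟨w', hw', hc'⟩ := h'
  obtain ⟨g, ⟨φV, φE, -, -, -⟩, -⟩ := rangeEquiv_of_mk_eq (hw.trans hw'.symm)
  rw [← hc, ← hc']
  exact Fintype.card_congr φE

lemma expAdj_rank {B : MDigraph} {p q : K0 B} (h : ExpAdj B p q) {r : ℕ}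
    (hp : HasRank p r) : HasRank q (r + 2) := by
  obtain ⟨x, y, φ, ε, hexp, hyf, hpq, hq⟩ := h
  obtain ⟨lw, hw⟩ := hexp
  have hcard := card_of_expWitness hw
  have hx : HasRank p (Fintype.card (toG x.H).E) := by rw [hpq]; exact hasRank_mk x
  have hxr := hasRank_unique hx hp
  rw [hq]
  have h2 := hasRank_mk y
  rwa [hcard, hxr] at h2


/-! ### uniqueness of the expanded edge -/

lemma uniq_exp {G G' : MDigraph} {φ : BLimit G ≃ₜ BLimit G'} {ε ε' : G.E}
    (h : IsSimpleExpRearrAt φ ε) (h' : IsSimpleExpRearrAt φ ε') : ε = ε' := by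
  by_contra hne
  obtain ⟨l, h1, h2, h3, h4, h5, h6, h7⟩ := h
  obtain ⟨l', h1', h2', h3', h4', h5', h6', h7'⟩ := h'
  have hmem : ((ε', ([] : List BasilicaR.E))) ∈ l.map Prod.fst :=
    h2 ε' (by simp; exact fun hc => hne hc.symm)
  obtain ⟨p, hp, hp1⟩ := List.mem_map.1 hmem
  have hmem' : ((ε', [bE 0])) ∈ l'.map Prod.fst := h3' ε' (Finset.mem_singleton_self _) 0
  obtain ⟨q, hq, hq1⟩ := List.mem_map.1 hmem'
  have e1 := h7 p hp (prepend BasilicaR [bE 0] (fun _ => bE 1))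
  have e2 := h7' q hq (fun _ => bE 1)
  rw [hp1] at e1
  rw [hq1] at e2
  rw [prepend_nil] at e1
  have key : pt BasilicaR bvι bvτ
      ((p.2, prepend BasilicaR [bE 0] (fun _ => bE 1)) : Omega BasilicaR G') =
      pt BasilicaR bvι bvτ ((q.2, fun _ => bE 1) : Omega BasilicaR G') := by
    rw [← e1, ← e2]
  have := pt_const1_eq key
  have hfun := congrFun (congrArg Prod.snd this) 0
  simp only [prepend] at hfun
  exact absurd hfun (by decide)

/-! ### conjugating an expansion witness by base isomorphisms -/

def conjAddr {X X2 : MDigraph} (gE : X.E ≃ X2.E) (a : Addr BasilicaR X) : Addr BasilicaR X2 :=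
  (gE a.1, a.2)

lemma conjAddr_injective {X X2 : MDigraph} (gE : X.E ≃ X2.E) :
    Function.Injective (conjAddr gE) := by
  rintro ⟨a, p⟩ ⟨a', p'⟩ hab
  obtain ⟨hh1, hh2⟩ := Prod.ext_iff.1 hab
  exact Prod.ext (gE.injective hh1) hh2

lemma map_fst_map {α β γ δ : Type*} (f1 : α → γ) (f2 : β → δ) (l : List (α × β)) :
    (l.map (fun pr => (f1 pr.1, f2 pr.2))).map Prod.fst = (l.map Prod.fst).map f1 := by
  simp [List.map_map]

lemma map_snd_map {α β γ δ : Type*} (f1 : α → γ) (f2 : β → δ) (l : List (α × β)) :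
    (l.map (fun pr => (f1 pr.1, f2 pr.2))).map Prod.snd = (l.map Prod.snd).map f2 := by
  simp [List.map_map]

lemma expWitness_conj {X X2 Y Y2 : MDigraph} {g : BLimit X ≃ₜ BLimit X2}
    {h : BLimit Y ≃ₜ BLimit Y2} (gE : X.E ≃ X2.E)
    (hgE : ∀ e s, g (pt BasilicaR bvι bvτ (e, s)) = pt BasilicaR bvι bvτ (gE e, s))
    (hE : Y.E ≃ Y2.E)
    (hhE : ∀ e s, h (pt BasilicaR bvι bvτ (e, s)) = pt BasilicaR bvι bvτ (hE e, s))
    {φ : BLimit X ≃ₜ BLimit Y} {ε : X.E} {l} (hw : ExpAtSetWitness φ {ε} l) :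
    ExpAtSetWitness (g.symm.trans (φ.trans h)) {gE ε}
      (l.map fun pr => (conjAddr gE pr.1, hE pr.2)) := by
  obtain ⟨h1, h2, h3, h4, h5, h6, h7⟩ := hw
  refine ⟨?_, ?_, ?_, ?_, ?_, ?_, ?_⟩
  · rintro p hp
    obtain ⟨pr, hpr, rfl⟩ := List.mem_map.1 hp
    rcases h1 pr hpr with ⟨hm, hl⟩ | ⟨hm, k, hl⟩
    · refine Or.inl ⟨?_, hl⟩
      simp only [Finset.mem_singleton] at hm ⊢
      exact fun hc => hm (gE.injective hc)
    · refine Or.inr ⟨?_, k, hl⟩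
      simp only [Finset.mem_singleton] at hm ⊢
      show gE pr.1.1 = gE ε
      rw [hm]
  · intro E hE2
    simp only [Finset.mem_singleton] at hE2
    have hne : gE.symm E ∉ ({ε} : Finset X.E) := by
      simp only [Finset.mem_singleton]
      intro hc
      exact hE2 (by rw [← hc, Equiv.apply_symm_apply])
    obtain ⟨a, ha, ha1⟩ := List.mem_map.1 (h2 (gE.symm E) hne)
    rw [map_fst_map]
    refine List.mem_map.2 ⟨a.1, List.mem_map.2 ⟨a, ha, rfl⟩, ?_⟩
    rw [ha1]
    simp [conjAddr]
  · intro E hE2 k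
    simp only [Finset.mem_singleton] at hE2
    obtain ⟨a, ha, ha1⟩ := List.mem_map.1 (h3 ε (Finset.mem_singleton_self _) k)
    rw [map_fst_map]
    refine List.mem_map.2 ⟨a.1, List.mem_map.2 ⟨a, ha, rfl⟩, ?_⟩
    rw [ha1, hE2]
    rfl
  · rw [map_fst_map]
    exact h4.map (conjAddr_injective gE)
  · rw [map_snd_map]
    exact h5.map hE.injective
  · intro E2
    rw [map_snd_map]
    exact List.mem_map.2 ⟨hE.symm E2, h6 _, by simp⟩
  · rintro p hp s
    obtain ⟨pr, hpr, rfl⟩ := List.mem_map.1 hp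
    have step1 : g.symm (pt BasilicaR bvι bvτ (gE pr.1.1, prepend BasilicaR pr.1.2 s)) =
        pt BasilicaR bvι bvτ (pr.1.1, prepend BasilicaR pr.1.2 s) := by
      rw [← hgE pr.1.1 (prepend BasilicaR pr.1.2 s), Homeomorph.symm_apply_apply]
    show (g.symm.trans (φ.trans h)) (pt BasilicaR bvι bvτ (gE pr.1.1, prepend BasilicaR pr.1.2 s))
      = pt BasilicaR bvι bvτ (hE pr.2, s)
    rw [Homeomorph.trans_apply, step1, Homeomorph.trans_apply, h7 pr hpr s, hhE]

/-! ### the wall invariant -/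

def EdgeInvS (B : MDigraph) (c : K0 B × K0 B) (S : Set (BLimit B)) : Prop :=
  ∃ (x y : RearrFrom B) (φ : BLimit (toG x.H) ≃ₜ BLimit (toG y.H)) (ε : (toG x.H).E),
    IsSimpleExpRearrAt φ ε ∧ y.f = x.f.trans φ ∧
    c.1 = Quot.mk (RangeEquiv B) x ∧ c.2 = Quot.mk (RangeEquiv B) y ∧
    S = x.f.symm '' cellSet ε

lemma image_symm_trans {A B C : Type*} [TopologicalSpace A] [TopologicalSpace B]
    [TopologicalSpace C] (f : A ≃ₜ B) (g : B ≃ₜ C) (s : Set C) :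
    (f.trans g).symm '' s = f.symm '' (g.symm '' s) := by
  rw [← Set.image_comp]; rfl

lemma edgeInvS_unique {B : MDigraph} {c : K0 B × K0 B} {S S' : Set (BLimit B)}
    (h : EdgeInvS B c S) (h' : EdgeInvS B c S') : S = S' := by
  obtain ⟨x, y, φ, ε, hexp, hyf, hc1, hc2, hS⟩ := h
  obtain ⟨x2, y2, φ2, ε2, hexp2, hyf2, hc1', hc2', hS'⟩ := h'
  obtain ⟨g, hg, hx2f⟩ := rangeEquiv_of_mk_eq (hc1.symm.trans hc1')
  obtain ⟨hmap, hh, hy2f⟩ := rangeEquiv_of_mk_eq (hc2.symm.trans hc2')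
  have hφ2 : φ2 = g.symm.trans (φ.trans hmap) := by
    apply Homeomorph.ext
    intro z
    obtain ⟨w, rfl⟩ := x2.f.surjective z
    have e1 : φ2 (x2.f w) = y2.f w := by rw [hyf2]; rfl
    have e2 : g.symm (x2.f w) = x.f w := by
      rw [hx2f]
      show g.symm (g (x.f w)) = x.f w
      rw [Homeomorph.symm_apply_apply]
    have e3 : φ (x.f w) = y.f w := by rw [hyf]; rfl
    have e4 : hmap (y.f w) = y2.f w := by rw [hy2f]; rfl
    rw [e1, Homeomorph.trans_apply, e2, Homeomorph.trans_apply, e3, e4]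
  obtain ⟨gV, gEq, hg1, hg2, hg3⟩ := hg
  obtain ⟨hV, hEq, hh1, hh2, hh3⟩ := hh
  obtain ⟨l, hl⟩ := hexp
  have hconj : IsSimpleExpRearrAt φ2 (gEq ε) := by
    rw [hφ2]
    exact ⟨_, expWitness_conj gEq hg3 hEq hh3 hl⟩
  have hε2 : ε2 = gEq ε := uniq_exp hexp2 hconj
  rw [hS, hS', hε2, hx2f, image_symm_trans, symm_image_cell g ε (gEq ε) (hg3 ε)]


/-! ### address translation along an expansion witness -/

noncomputable def trAddr {X Z : MDigraph} (lψ : List (Addr BasilicaR X × Z.E)) (εz : Z.E)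
    (a : Addr BasilicaR X) : Addr BasilicaR Z :=
  if h : ∃ z', (a, z') ∈ lψ then (h.choose, []) else (εz, a.2)

lemma trAddr_pos {X Z : MDigraph} {lψ : List (Addr BasilicaR X × Z.E)} {εz : Z.E}
    {a : Addr BasilicaR X} {z' : Z.E} (h : (a, z') ∈ lψ)
    (hnodup : (lψ.map Prod.fst).Nodup) : trAddr lψ εz a = (z', []) := by
  rw [trAddr]
  refine (dif_pos ⟨z', h⟩).trans ?_
  have hc := (⟨z', h⟩ : ∃ z'', (a, z'') ∈ lψ).choose_spec
  have heq := mem_eq_of_map_nodup hnodup hc h (rfl : Prod.fst _ = Prod.fst _)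
  exact Prod.ext (congrArg Prod.snd heq) rfl

lemma trAddr_neg {X Z : MDigraph} {lψ : List (Addr BasilicaR X × Z.E)} {εz : Z.E}
    {a : Addr BasilicaR X} (h : ¬ ∃ z', (a, z') ∈ lψ) : trAddr lψ εz a = (εz, a.2) :=
  dif_neg h

lemma map_fst_map' {α β γ : Type*} (f1 : α → γ) (l : List (α × β)) :
    (l.map (fun pr => (f1 pr.1, pr.2))).map Prod.fst = (l.map Prod.fst).map f1 := by
  simp [List.map_map]

/-! ### contraction followed by a finer expansion is a simple expansion -/

lemma contrExp {X Z W : MDigraph} (ψ : BLimit X ≃ₜ BLimit Z) (χ : BLimit X ≃ₜ BLimit W)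
    (S₁ : Finset X.E) (ε : X.E) (hε : ε ∉ S₁) {lψ : List (Addr BasilicaR X × Z.E)}
    {lχ : List (Addr BasilicaR X × W.E)} (εz : Z.E)
    (hψ : ExpAtSetWitness ψ S₁ lψ) (hχ : ExpAtSetWitness χ (insert ε S₁) lχ)
    (hεz : ((ε, ([] : List BasilicaR.E)), εz) ∈ lψ) :
    IsSimpleExpRearrAt (ψ.symm.trans χ) εz := by
  obtain ⟨p1, p2, p3, p4, p5, p6, p7⟩ := hψ
  obtain ⟨q1, q2, q3, q4, q5, q6, q7⟩ := hχ
  have fstu : ∀ {a : Addr BasilicaR X} {z z' : Z.E}, (a, z) ∈ lψ → (a, z') ∈ lψ → z = z' :=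
    fun h h' => congrArg Prod.snd (mem_eq_of_map_nodup p4 h h' rfl)
  have sndu : ∀ {a a' : Addr BasilicaR X} {z : Z.E}, (a, z) ∈ lψ → (a', z) ∈ lψ → a = a' :=
    fun h h' => congrArg Prod.fst (mem_eq_of_map_nodup p5 h h' rfl)
  have hnotψ : ∀ k : Fin 3, ¬ ∃ z', (((ε, [(k : BasilicaR.E)]) : Addr BasilicaR X), z') ∈ lψ := by
    rintro k ⟨z', hz⟩
    rcases p1 _ hz with ⟨hm, hl⟩ | ⟨hm, -⟩
    · exact absurd hl (by simp)
    · exact hε hm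
  -- classification of the addresses appearing in `lχ`
  have hclass : ∀ a : Addr BasilicaR X, a ∈ lχ.map Prod.fst →
      (∃ z', ((a, z') ∈ lψ) ∧ z' ≠ εz ∧ trAddr lψ εz a = (z', ([] : List BasilicaR.E))) ∨
      (a.1 = ε ∧ ∃ k : Fin 3, a.2 = [(k : BasilicaR.E)] ∧ trAddr lψ εz a = (εz, [(k : BasilicaR.E)])) := by
    intro a ha
    obtain ⟨pr, hpr, rfl⟩ := List.mem_map.1 ha
    rcases q1 pr hpr with ⟨hm, hl⟩ | ⟨hm, k, hl⟩
    · -- unexpanded in both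
      have hne : pr.1.1 ≠ ε := fun hc => hm (by rw [hc]; exact Finset.mem_insert_self _ _)
      have hS : pr.1.1 ∉ S₁ := fun hc => hm (Finset.mem_insert_of_mem hc)
      obtain ⟨pp, hpp, hpp1⟩ := List.mem_map.1 (p2 pr.1.1 hS)
      have h12 : pp = (pr.1, pp.2) := by
        refine Prod.ext ?_ rfl
        rw [hpp1]
        exact Prod.ext rfl hl.symm
      have hmemp : (pr.1, pp.2) ∈ lψ := by rw [← h12]; exact hpp
      refine Or.inl ⟨pp.2, hmemp, ?_, trAddr_pos hmemp p4⟩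
      intro hc
      rw [hc] at hmemp
      have := sndu hmemp hεz
      exact hne (congrArg Prod.fst this)
    · rcases Finset.mem_insert.1 hm with hm' | hm'
      · -- the further-expanded cell
        refine Or.inr ⟨hm', k, hl, ?_⟩
        have hnot : ¬ ∃ z', (pr.1, z') ∈ lψ := by
          have hpr1 : pr.1 = ((ε, [(k : BasilicaR.E)]) : Addr BasilicaR X) := Prod.ext hm' hl
          rw [hpr1]
          exact hnotψ k
        rw [trAddr_neg hnot, hl]
        rfl
      · -- expanded in both
        have hpr1 : pr.1 = (pr.1.1, [(k : BasilicaR.E)]) := Prod.ext rfl hl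
        obtain ⟨pp, hpp, hpp1⟩ := List.mem_map.1 (p3 pr.1.1 hm' k)
        have h12 : pp = (pr.1, pp.2) := by
          refine Prod.ext ?_ rfl
          rw [hpp1, hpr1]
        have hmemp : (pr.1, pp.2) ∈ lψ := by rw [← h12]; exact hpp
        refine Or.inl ⟨pp.2, hmemp, ?_, trAddr_pos hmemp p4⟩
        intro hc
        rw [hc] at hmemp
        have := sndu hmemp hεz
        rw [hpr1] at this
        exact absurd (congrArg Prod.snd this) (by simp)
  refine ⟨lχ.map (fun pr => (trAddr lψ εz pr.1, pr.2)), ?_, ?_, ?_, ?_, ?_, ?_, ?_⟩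
  · -- shapes
    rintro p hp
    obtain ⟨pr, hpr, rfl⟩ := List.mem_map.1 hp
    rcases hclass pr.1 (List.mem_map.2 ⟨pr, hpr, rfl⟩) with ⟨z', -, hzne, htr⟩ | ⟨-, k, -, htr⟩
    · refine Or.inl ⟨?_, by rw [htr]⟩
      rw [htr]
      simpa using hzne
    · refine Or.inr ⟨?_, k, by rw [htr]⟩
      rw [htr]
      simp
  · -- coverage of unexpanded cells
    intro E hE2
    simp only [Finset.mem_singleton] at hE2
    obtain ⟨pe, hpe, hpe2⟩ := List.mem_map.1 (p6 E)
    rcases p1 pe hpe with ⟨hm, hl⟩ | ⟨hm, k, hl⟩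
    · have hne : pe.1.1 ≠ ε := by
        intro hc
        have hpe1 : pe = ((ε, ([] : List BasilicaR.E)), E) := by
          refine Prod.ext ?_ hpe2
          rw [show pe.1 = (pe.1.1, pe.1.2) from rfl, hc, hl]
        rw [hpe1] at hpe
        exact hE2 (fstu hpe hεz)
      have hni : pe.1.1 ∉ insert ε S₁ := by
        intro hc
        rcases Finset.mem_insert.1 hc with hc' | hc'
        · exact hne hc'
        · exact hm hc'
      obtain ⟨pc, hpc, hpc1⟩ := List.mem_map.1 (q2 pe.1.1 hni)
      refine List.mem_map.2 ⟨(trAddr lψ εz pc.1, pc.2),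
        List.mem_map.2 ⟨pc, hpc, rfl⟩, ?_⟩
      show trAddr lψ εz pc.1 = (E, [])
      rw [hpc1]
      have hmm : ((pe.1.1, ([] : List BasilicaR.E)), E) ∈ lψ := by
        have hpe1 : pe = ((pe.1.1, ([] : List BasilicaR.E)), E) :=
          Prod.ext (Prod.ext rfl hl) hpe2
        rw [← hpe1]
        exact hpe
      exact trAddr_pos hmm p4
    · obtain ⟨pc, hpc, hpc1⟩ :=
        List.mem_map.1 (q3 pe.1.1 (Finset.mem_insert_of_mem hm) k)
      refine List.mem_map.2 ⟨(trAddr lψ εz pc.1, pc.2),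
        List.mem_map.2 ⟨pc, hpc, rfl⟩, ?_⟩
      show trAddr lψ εz pc.1 = (E, [])
      rw [hpc1]
      have hmm : ((pe.1.1, [(k : BasilicaR.E)]), E) ∈ lψ := by
        have hpe1 : pe = ((pe.1.1, [(k : BasilicaR.E)]), E) :=
          Prod.ext (Prod.ext rfl hl) hpe2
        rw [← hpe1]
        exact hpe
      exact trAddr_pos hmm p4
  · -- coverage of the thirds
    intro E hE2 k
    simp only [Finset.mem_singleton] at hE2
    obtain ⟨pc, hpc, hpc1⟩ := List.mem_map.1 (q3 ε (Finset.mem_insert_self _ _) k)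
    refine List.mem_map.2 ⟨(trAddr lψ εz pc.1, pc.2),
      List.mem_map.2 ⟨pc, hpc, rfl⟩, ?_⟩
    show trAddr lψ εz pc.1 = (E, [(k : BasilicaR.E)])
    have hnot : ¬ ∃ z', (pc.1, z') ∈ lψ := by
      rw [hpc1]
      exact hnotψ k
    rw [trAddr_neg hnot, hpc1, hE2]
    rfl
  · -- fst nodup
    rw [map_fst_map']
    refine List.Nodup.map_on ?_ q4
    intro a ha b hb heq
    rcases hclass a ha with ⟨za, ma, -, ta⟩ | ⟨ha1, k, ha2, ta⟩ <;>
      rcases hclass b hb with ⟨zb, mb, -, tb⟩ | ⟨hb1, k', hb2, tb⟩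
    · rw [ta, tb] at heq
      have hz : za = zb := congrArg Prod.fst heq
      rw [hz] at ma
      exact sndu ma mb
    · rw [ta, tb] at heq
      exact absurd (congrArg Prod.snd heq) (by simp)
    · rw [ta, tb] at heq
      exact absurd (congrArg Prod.snd heq) (by simp)
    · rw [ta, tb] at heq
      have hk : [(k : BasilicaR.E)] = [(k' : BasilicaR.E)] := congrArg Prod.snd heq
      exact Prod.ext (ha1.trans hb1.symm) (ha2.trans (hk.trans hb2.symm))
  · -- snd nodup
    have hid : ((lχ.map (fun pr => (trAddr lψ εz pr.1, pr.2))).map Prod.snd) =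
        lχ.map Prod.snd := by
      simp [List.map_map]
    rw [hid]
    exact q5
  · -- snd coverage
    intro E2
    have hid : ((lχ.map (fun pr => (trAddr lψ εz pr.1, pr.2))).map Prod.snd) =
        lχ.map Prod.snd := by
      simp [List.map_map]
    rw [hid]
    exact q6 E2
  · -- the defining equations
    rintro p hp s
    obtain ⟨pr, hpr, rfl⟩ := List.mem_map.1 hp
    rcases hclass pr.1 (List.mem_map.2 ⟨pr, hpr, rfl⟩) with ⟨z', mz, -, htr⟩ | ⟨hm, k, hl, htr⟩
    · rw [htr]
      show (ψ.symm.trans χ) (pt BasilicaR bvι bvτ (z', prepend BasilicaR [] s)) =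
        pt BasilicaR bvι bvτ (pr.2, s)
      rw [prepend_nil, Homeomorph.trans_apply]
      have e0 := p7 (pr.1, z') mz s
      have e0' : ψ.symm (pt BasilicaR bvι bvτ (z', s)) =
          pt BasilicaR bvι bvτ (pr.1.1, prepend BasilicaR pr.1.2 s) := by
        rw [← e0, Homeomorph.symm_apply_apply]
      rw [e0', q7 pr hpr s]
    · rw [htr]
      show (ψ.symm.trans χ)
          (pt BasilicaR bvι bvτ (εz, prepend BasilicaR [(k : BasilicaR.E)] s)) =
        pt BasilicaR bvι bvτ (pr.2, s)
      rw [Homeomorph.trans_apply]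
      have e0 := p7 ((ε, ([] : List BasilicaR.E)), εz) hεz
        (prepend BasilicaR [(k : BasilicaR.E)] s)
      rw [show ((ε, ([] : List BasilicaR.E)), εz).1.2 = ([] : List BasilicaR.E) from rfl,
        prepend_nil] at e0
      have e0' : ψ.symm (pt BasilicaR bvι bvτ (εz, prepend BasilicaR [(k : BasilicaR.E)] s)) =
          pt BasilicaR bvι bvτ (ε, prepend BasilicaR [(k : BasilicaR.E)] s) := by
        rw [← e0, Homeomorph.symm_apply_apply]
      have e1 := q7 pr hpr s
      rw [hm, hl] at e1
      rw [e0']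
      exact e1


/-! ### composing two simple expansions -/

def pushAddr {A B : MDigraph} (w : B.E → (Addr BasilicaR A × B.E)) (bp : Addr BasilicaR B) :
    Addr BasilicaR A := ((w bp.1).1.1, (w bp.1).1.2 ++ bp.2)

lemma compExp {A B C : MDigraph} {f : BLimit A ≃ₜ BLimit B} {g : BLimit B ≃ₜ BLimit C}
    {α : A.E} {β : B.E} {la : List (Addr BasilicaR A × B.E)} {lb : List (Addr BasilicaR B × C.E)}
    (hla : ExpAtSetWitness f {α} la) (hlb : ExpAtSetWitness g {β} lb)
    (aβ : A.E) (hab : ((aβ, ([] : List BasilicaR.E)), β) ∈ la) :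
    ∃ l : List (Addr BasilicaR A × C.E),
      ExpAtSetWitness (f.trans g) (insert α {aβ}) l ∧
      (∀ pr ∈ la, pr.2 ≠ β → ∀ c : C.E, ((pr.2, ([] : List BasilicaR.E)), c) ∈ lb →
        (pr.1, c) ∈ l) ∧
      (∀ (k : Fin 3) (c : C.E), ((β, [(k : BasilicaR.E)]), c) ∈ lb →
        ((aβ, [(k : BasilicaR.E)]), c) ∈ l) := by
  obtain ⟨a1, a2, a3, a4, a5, a6, a7⟩ := hla
  obtain ⟨b1, b2, b3, b4, b5, b6, b7⟩ := hlb
  have fstua : ∀ {a : Addr BasilicaR A} {z z' : B.E}, (a, z) ∈ la → (a, z') ∈ la → z = z' :=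
    fun h h' => congrArg Prod.snd (mem_eq_of_map_nodup a4 h h' rfl)
  have sndua : ∀ {a a' : Addr BasilicaR A} {z : B.E}, (a, z) ∈ la → (a', z) ∈ la → a = a' :=
    fun h h' => congrArg Prod.fst (mem_eq_of_map_nodup a5 h h' rfl)
  have haβ : aβ ≠ α := by
    rcases a1 _ hab with ⟨hm, -⟩ | ⟨-, k, hl⟩
    · simpa using hm
    · exact absurd hl (by simp)
  have hcov : ∀ b : B.E, ∃ pr, pr ∈ la ∧ pr.2 = b := by
    intro b
    obtain ⟨pr, h1, h2⟩ := List.mem_map.1 (a6 b)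
    exact ⟨pr, h1, h2⟩
  choose w hw1 hw2 using hcov
  have hwla : ∀ pr ∈ la, w pr.2 = pr := fun pr hpr =>
    mem_eq_of_map_nodup a5 (hw1 pr.2) hpr (hw2 pr.2)
  have hwβ : w β = ((aβ, ([] : List BasilicaR.E)), β) := hwla _ hab
  refine ⟨lb.map (fun qr => (pushAddr w qr.1, qr.2)), ⟨?_, ?_, ?_, ?_, ?_, ?_, ?_⟩, ?_, ?_⟩
  · -- shapes
    rintro p hp
    obtain ⟨qr, hqr, rfl⟩ := List.mem_map.1 hp
    rcases b1 qr hqr with ⟨hm, hl⟩ | ⟨hm, k, hl⟩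
    · -- qr.1.1 ≠ β, qr.1.2 = []
      have hne : qr.1.1 ≠ β := by simpa using hm
      rcases a1 (w qr.1.1) (hw1 qr.1.1) with ⟨hm2, hl2⟩ | ⟨hm2, k2, hl2⟩
      · -- unexpanded everywhere
        refine Or.inl ⟨?_, ?_⟩
        · simp only [Finset.mem_insert, Finset.mem_singleton]
          rintro (hc | hc)
          · exact (by simpa using hm2 : (w qr.1.1).1.1 ≠ α) hc
          · -- (w qr.1.1).1.1 = aβ with empty tail forces snd = β
            have hw1' : (w qr.1.1).1 = (aβ, ([] : List BasilicaR.E)) := Prod.ext hc hl2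
            have hmem : ((aβ, ([] : List BasilicaR.E)), (w qr.1.1).2) ∈ la := by
              rw [← hw1']
              exact hw1 qr.1.1
            have := fstua hmem hab
            rw [hw2 qr.1.1] at this
            exact hne this
        · show (w qr.1.1).1.2 ++ qr.1.2 = []
          rw [hl2, hl]
          rfl
      · -- the α-cell
        refine Or.inr ⟨?_, k2, ?_⟩
        · simp only [Finset.mem_insert]
          exact Or.inl (by simpa using hm2 : (w qr.1.1).1.1 = α)
        · show (w qr.1.1).1.2 ++ qr.1.2 = [(k2 : BasilicaR.E)]
          rw [hl2, hl]
          rfl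
    · -- qr.1.1 = β
      have hm' : qr.1.1 = β := by simpa using hm
      refine Or.inr ⟨?_, k, ?_⟩
      · simp only [Finset.mem_insert, Finset.mem_singleton]
        refine Or.inr ?_
        show (w qr.1.1).1.1 = aβ
        rw [hm', hwβ]
      · show (w qr.1.1).1.2 ++ qr.1.2 = [(k : BasilicaR.E)]
        rw [hm', hwβ, hl]
        rfl
  · -- coverage of unexpanded cells
    intro E hE2
    simp only [Finset.mem_insert, Finset.mem_singleton] at hE2
    push_neg at hE2
    obtain ⟨hEα, hEβ⟩ := hE2
    obtain ⟨pe, hpe, hpe1⟩ := List.mem_map.1 (a2 E (by simpa using hEα))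
    have hpe2 : pe.2 ≠ β := by
      intro hc
      have hpair : pe = ((E, ([] : List BasilicaR.E)), β) := Prod.ext hpe1 hc
      have heq2 := sndua (by rw [← hpair]; exact hpe : ((E, ([] : List BasilicaR.E)), β) ∈ la) hab
      exact hEβ (congrArg Prod.fst heq2)
    obtain ⟨qc, hqc, hqc1⟩ := List.mem_map.1 (b2 pe.2 (by simpa using hpe2))
    refine List.mem_map.2 ⟨(pushAddr w qc.1, qc.2), List.mem_map.2 ⟨qc, hqc, rfl⟩, ?_⟩
    show pushAddr w qc.1 = (E, [])
    rw [hqc1]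
    show ((w pe.2).1.1, (w pe.2).1.2 ++ []) = (E, [])
    rw [hwla pe hpe, hpe1]
    simp
  · -- coverage of the thirds
    intro E hE2 k
    simp only [Finset.mem_insert, Finset.mem_singleton] at hE2
    rcases hE2 with hE2 | hE2
    · -- E = α
      obtain ⟨pa, hpa, hpa1⟩ := List.mem_map.1 (a3 α (Finset.mem_singleton_self _) k)
      have hpa2 : pa.2 ≠ β := by
        intro hc
        have hppair : pa = ((α, [(k : BasilicaR.E)]), β) := Prod.ext hpa1 hc
        have heq2 := sndua (by rw [← hppair]; exact hpa : ((α, [(k : BasilicaR.E)]), β) ∈ la) hab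
        exact absurd (congrArg Prod.snd heq2) (by simp)
      obtain ⟨qc, hqc, hqc1⟩ := List.mem_map.1 (b2 pa.2 (by simpa using hpa2))
      refine List.mem_map.2 ⟨(pushAddr w qc.1, qc.2), List.mem_map.2 ⟨qc, hqc, rfl⟩, ?_⟩
      show pushAddr w qc.1 = (E, [(k : BasilicaR.E)])
      rw [hqc1]
      show ((w pa.2).1.1, (w pa.2).1.2 ++ []) = (E, [(k : BasilicaR.E)])
      rw [hwla pa hpa, hpa1, hE2]
      simp
      rfl
    · -- E = aβ
      obtain ⟨qc, hqc, hqc1⟩ := List.mem_map.1 (b3 β (Finset.mem_singleton_self _) k)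
      refine List.mem_map.2 ⟨(pushAddr w qc.1, qc.2), List.mem_map.2 ⟨qc, hqc, rfl⟩, ?_⟩
      show pushAddr w qc.1 = (E, [(k : BasilicaR.E)])
      rw [hqc1]
      show ((w β).1.1, (w β).1.2 ++ ([(k : BasilicaR.E)] : List BasilicaR.E)) =
        (E, [(k : BasilicaR.E)])
      rw [hwβ, hE2]
      rfl
  · -- fst nodup
    rw [map_fst_map']
    refine List.Nodup.map_on ?_ b4
    intro a ha b hb heq
    have heq' : (((w a.1).1.1, (w a.1).1.2 ++ a.2) : Addr BasilicaR A) =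
        ((w b.1).1.1, (w b.1).1.2 ++ b.2) := heq
    rw [Prod.mk.injEq] at heq'
    obtain ⟨e1, e2⟩ := heq'
    obtain ⟨qa, hqa, hqa1⟩ := List.mem_map.1 ha
    obtain ⟨qb, hqb, hqb1⟩ := List.mem_map.1 hb
    have hsha := b1 qa hqa
    rw [hqa1] at hsha
    have hshb := b1 qb hqb
    rw [hqb1] at hshb
    have hwβ1 : (w β).1.1 = aβ := by rw [hwβ]
    have hwβ2 : (w β).1.2 = ([] : List BasilicaR.E) := by rw [hwβ]
    rcases hsha with ⟨hma, hla'⟩ | ⟨hma, ka, hla'⟩ <;>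
      rcases hshb with ⟨hmb, hlb'⟩ | ⟨hmb, kb, hlb'⟩
    · rw [hla', hlb'] at e2
      simp only [List.append_nil] at e2
      have hpaireq : (w a.1).1 = (w b.1).1 := Prod.ext e1 e2
      have hwa : ((w a.1).1, a.1) = w a.1 := Prod.ext rfl (hw2 a.1).symm
      have hwb : ((w b.1).1, b.1) = w b.1 := Prod.ext rfl (hw2 b.1).symm
      have m1 : ((w b.1).1, a.1) ∈ la := by rw [← hpaireq, hwa]; exact hw1 a.1
      have m2 : ((w b.1).1, b.1) ∈ la := by rw [hwb]; exact hw1 b.1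
      exact Prod.ext (fstua m1 m2) (hla'.trans hlb'.symm)
    · have hmb' : b.1 = β := by simpa using hmb
      rw [hla', hlb', hmb', hwβ2] at e2
      simp only [List.append_nil, List.nil_append] at e2
      rcases a1 (w a.1) (hw1 a.1) with ⟨-, hl2⟩ | ⟨hm2, k2, hl2⟩
      · rw [hl2] at e2
        exact absurd e2 (fun h => List.cons_ne_nil _ _ h.symm)
      · have hα : (w a.1).1.1 = α := by simpa using hm2
        rw [hmb', hwβ1, hα] at e1
        exact absurd e1.symm haβ
    · have hma' : a.1 = β := by simpa using hma
      rw [hla', hlb', hma', hwβ2] at e2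
      simp only [List.append_nil, List.nil_append] at e2
      rcases a1 (w b.1) (hw1 b.1) with ⟨-, hl2⟩ | ⟨hm2, k2, hl2⟩
      · rw [hl2] at e2
        exact absurd e2.symm (fun h => List.cons_ne_nil _ _ h.symm)
      · have hα : (w b.1).1.1 = α := by simpa using hm2
        rw [hma', hwβ1, hα] at e1
        exact absurd e1 haβ
    · have hma' : a.1 = β := by simpa using hma
      have hmb' : b.1 = β := by simpa using hmb
      rw [hla', hlb', hma', hmb', hwβ2] at e2
      exact Prod.ext (hma'.trans hmb'.symm) (hla'.trans (e2.trans hlb'.symm))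
  · -- snd nodup
    have hid : ((lb.map (fun qr => (pushAddr w qr.1, qr.2))).map Prod.snd) =
        lb.map Prod.snd := by
      simp [List.map_map]
    rw [hid]
    exact b5
  · -- snd coverage
    intro E2
    have hid : ((lb.map (fun qr => (pushAddr w qr.1, qr.2))).map Prod.snd) =
        lb.map Prod.snd := by
      simp [List.map_map]
    rw [hid]
    exact b6 E2
  · -- defining equations
    rintro p hp s
    obtain ⟨qr, hqr, rfl⟩ := List.mem_map.1 hp
    show (f.trans g) (pt BasilicaR bvι bvτ ((w qr.1.1).1.1,
        prepend BasilicaR ((w qr.1.1).1.2 ++ qr.1.2) s)) = pt BasilicaR bvι bvτ (qr.2, s)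
    rw [prepend_append, Homeomorph.trans_apply]
    have e0 := a7 (w qr.1.1) (hw1 qr.1.1) (prepend BasilicaR qr.1.2 s)
    rw [hw2 qr.1.1] at e0
    rw [e0]
    exact b7 qr hqr s
  · -- tracking (i)
    intro pr hpr hprβ c hc
    have : (pushAddr w ((pr.2, ([] : List BasilicaR.E)) : Addr BasilicaR B), c) ∈
        lb.map (fun qr => (pushAddr w qr.1, qr.2)) :=
      List.mem_map.2 ⟨((pr.2, ([] : List BasilicaR.E)), c), hc, rfl⟩
    have hpush : pushAddr w ((pr.2, ([] : List BasilicaR.E)) : Addr BasilicaR B) = pr.1 := by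
      show ((w pr.2).1.1, (w pr.2).1.2 ++ []) = pr.1
      rw [hwla pr hpr]
      simp
      rfl
    rwa [hpush] at this
  · -- tracking (ii)
    intro k c hc
    have : (pushAddr w ((β, [(k : BasilicaR.E)]) : Addr BasilicaR B), c) ∈
        lb.map (fun qr => (pushAddr w qr.1, qr.2)) :=
      List.mem_map.2 ⟨((β, [(k : BasilicaR.E)]), c), hc, rfl⟩
    have hpush : pushAddr w ((β, [(k : BasilicaR.E)]) : Addr BasilicaR B) =
        (aβ, [(k : BasilicaR.E)]) := by
      show ((w β).1.1, (w β).1.2 ++ ([(k : BasilicaR.E)] : List BasilicaR.E)) =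
        (aβ, [(k : BasilicaR.E)])
      rw [hwβ]
      rfl
    rwa [hpush] at this


/-! ### expansion followed by a matching contraction -/

lemma compContr {G J H : MDigraph} {Q : BLimit G ≃ₜ BLimit J} {C : BLimit H ≃ₜ BLimit J}
    {S : Finset G.E} {γ : H.E} {lQ : List (Addr BasilicaR G × J.E)}
    {lC : List (Addr BasilicaR H × J.E)} (hQ : ExpAtSetWitness Q S lQ)
    (hC : ExpAtSetWitness C {γ} lC) (σ : G.E) (hσ : σ ∈ S)
    (hmatch : ∀ k : Fin 3, ∃ j : J.E,
      ((σ, [(k : BasilicaR.E)]), j) ∈ lQ ∧ ((γ, [(k : BasilicaR.E)]), j) ∈ lC) :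
    ∃ l', ExpAtSetWitness (Q.trans C.symm) (S.erase σ) l' := by
  obtain ⟨p1, p2, p3, p4, p5, p6, p7⟩ := hQ
  obtain ⟨c1, c2, c3, c4, c5, c6, c7⟩ := hC
  have fstuq : ∀ {a : Addr BasilicaR G} {z z' : J.E}, (a, z) ∈ lQ → (a, z') ∈ lQ → z = z' :=
    fun h h' => congrArg Prod.snd (mem_eq_of_map_nodup p4 h h' rfl)
  have snduq : ∀ {x y : Addr BasilicaR G × J.E}, x ∈ lQ → y ∈ lQ → x.2 = y.2 → x = y :=
    fun h h' hh => mem_eq_of_map_nodup p5 h h' hh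
  have fstuc : ∀ {a : Addr BasilicaR H} {z z' : J.E}, (a, z) ∈ lC → (a, z') ∈ lC → z = z' :=
    fun h h' => congrArg Prod.snd (mem_eq_of_map_nodup c4 h h' rfl)
  have snduc : ∀ {x y : Addr BasilicaR H × J.E}, x ∈ lC → y ∈ lC → x.2 = y.2 → x = y :=
    fun h h' hh => mem_eq_of_map_nodup c5 h h' hh
  have hcovC : ∀ j : J.E, ∃ qr, qr ∈ lC ∧ qr.2 = j := by
    intro j
    obtain ⟨qr, h1, h2⟩ := List.mem_map.1 (c6 j)
    exact ⟨qr, h1, h2⟩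
  choose v hv1 hv2 using hcovC
  have hvC : ∀ qr ∈ lC, v qr.2 = qr := fun qr hqr => snduc (hv1 qr.2) hqr (hv2 qr.2)
  -- shape of `v pr.2` for entries away from σ
  have hvshape : ∀ pr ∈ lQ, pr.1.1 ≠ σ →
      (v pr.2).1.1 ≠ γ ∧ (v pr.2).1.2 = ([] : List BasilicaR.E) := by
    intro pr hpr hne
    rcases c1 (v pr.2) (hv1 pr.2) with ⟨hm, hl⟩ | ⟨hm, k, hl⟩
    · exact ⟨by simpa using hm, hl⟩
    · exfalso
      have hm' : (v pr.2).1.1 = γ := by simpa using hm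
      obtain ⟨jk, hjQ, hjC⟩ := hmatch k
      have hvpair : v pr.2 = ((γ, [(k : BasilicaR.E)]), pr.2) := by
        refine Prod.ext ?_ (hv2 pr.2)
        rw [show (v pr.2).1 = ((v pr.2).1.1, (v pr.2).1.2) from rfl, hm', hl]
        rfl
      have hj : pr.2 = jk := by
        have hmem : ((γ, [(k : BasilicaR.E)]), pr.2) ∈ lC := by
          rw [← hvpair]
          exact hv1 pr.2
        exact fstuc hmem hjC
      have hpre : pr = ((σ, [(k : BasilicaR.E)]), jk) := by
        refine snduq hpr hjQ ?_
        exact hj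
      exact hne (congrArg (fun x => x.1.1) hpre)
  refine ⟨((σ, ([] : List BasilicaR.E)), γ) ::
    (lQ.filter (fun pr => pr.1.1 ≠ σ)).map (fun pr => (pr.1, (v pr.2).1.1)), ?_, ?_, ?_, ?_, ?_,
    ?_, ?_⟩
  · rintro p hp
    rcases List.mem_cons.1 hp with rfl | hp'
    · exact Or.inl ⟨Finset.notMem_erase _ _, rfl⟩
    · obtain ⟨pr, hprf, rfl⟩ := List.mem_map.1 hp'
      have hprQ : pr ∈ lQ := List.mem_of_mem_filter hprf
      have hprne : pr.1.1 ≠ σ := by simpa using List.of_mem_filter hprf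
      rcases p1 pr hprQ with ⟨hm, hl⟩ | ⟨hm, k, hl⟩
      · exact Or.inl ⟨fun hc => hm (Finset.mem_of_mem_erase hc), hl⟩
      · exact Or.inr ⟨Finset.mem_erase.2 ⟨hprne, hm⟩, k, hl⟩
  · intro E hE2
    by_cases hEσ : E = σ
    · rw [hEσ]
      exact List.mem_map.2 ⟨_, List.mem_cons_self, rfl⟩
    · have hES : E ∉ S := fun hc => hE2 (Finset.mem_erase.2 ⟨hEσ, hc⟩)
      obtain ⟨pr, hpr, hpr1⟩ := List.mem_map.1 (p2 E hES)
      have hprne : pr.1.1 ≠ σ := by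
        rw [show pr.1.1 = (E, ([] : List BasilicaR.E)).1 from congrArg Prod.fst hpr1]
        exact hEσ
      refine List.mem_map.2 ⟨(pr.1, (v pr.2).1.1), List.mem_cons_of_mem _
        (List.mem_map.2 ⟨pr, List.mem_filter.2 ⟨hpr, by simpa using hprne⟩, rfl⟩), ?_⟩
      exact hpr1
  · intro E hE2 k
    obtain ⟨hEne, hES⟩ := Finset.mem_erase.1 hE2
    obtain ⟨pr, hpr, hpr1⟩ := List.mem_map.1 (p3 E hES k)
    have hprne : pr.1.1 ≠ σ := by
      rw [show pr.1.1 = (E, [(k : BasilicaR.E)]).1 from congrArg Prod.fst hpr1]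
      exact hEne
    refine List.mem_map.2 ⟨(pr.1, (v pr.2).1.1), List.mem_cons_of_mem _
      (List.mem_map.2 ⟨pr, List.mem_filter.2 ⟨hpr, by simpa using hprne⟩, rfl⟩), ?_⟩
    exact hpr1
  · -- fst nodup
    simp only [List.map_cons]
    refine List.nodup_cons.2 ⟨?_, ?_⟩
    · intro hc
      have hc' : ((σ, ([] : List BasilicaR.E))) ∈
          ((lQ.filter (fun pr => pr.1.1 ≠ σ)).map (fun pr => (pr.1, (v pr.2).1.1))).map
            Prod.fst := hc
      obtain ⟨x, hx, hx1⟩ := List.mem_map.1 hc'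
      obtain ⟨pr, hprf, rfl⟩ := List.mem_map.1 hx
      have hprne : pr.1.1 ≠ σ := by simpa using List.of_mem_filter hprf
      exact hprne (congrArg Prod.fst hx1)
    · have hmm : ((lQ.filter (fun pr => pr.1.1 ≠ σ)).map
          (fun pr => (pr.1, (v pr.2).1.1))).map Prod.fst =
          (lQ.filter (fun pr => pr.1.1 ≠ σ)).map Prod.fst := by
        rw [List.map_map]
        rfl
      rw [hmm]
      exact List.Nodup.sublist ((List.filter_sublist).map Prod.fst) p4
  · -- snd nodup
    simp only [List.map_cons]
    refine List.nodup_cons.2 ⟨?_, ?_⟩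
    · intro hc
      have hc' : γ ∈ ((lQ.filter (fun pr => pr.1.1 ≠ σ)).map
          (fun pr => (pr.1, (v pr.2).1.1))).map Prod.snd := hc
      obtain ⟨x, hx, hx1⟩ := List.mem_map.1 hc'
      obtain ⟨pr, hprf, rfl⟩ := List.mem_map.1 hx
      have hprQ : pr ∈ lQ := List.mem_of_mem_filter hprf
      have hprne : pr.1.1 ≠ σ := by simpa using List.of_mem_filter hprf
      exact (hvshape pr hprQ hprne).1 hx1
    · have hmm : ((lQ.filter (fun pr => pr.1.1 ≠ σ)).map
          (fun pr => (pr.1, (v pr.2).1.1))).map Prod.snd =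
          (lQ.filter (fun pr => pr.1.1 ≠ σ)).map (fun pr => (v pr.2).1.1) := by
        rw [List.map_map]
        rfl
      rw [hmm]
      refine List.Nodup.map_on ?_ (List.Nodup.filter _ (List.Nodup.of_map _ p4))
      intro pr hprf pr' hprf' heq
      have hprQ : pr ∈ lQ := List.mem_of_mem_filter hprf
      have hprQ' : pr' ∈ lQ := List.mem_of_mem_filter hprf'
      have hne : pr.1.1 ≠ σ := by simpa using List.of_mem_filter hprf
      have hne' : pr'.1.1 ≠ σ := by simpa using List.of_mem_filter hprf'
      have hsh := hvshape pr hprQ hne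
      have hsh' := hvshape pr' hprQ' hne'
      have hfst : (v pr.2).1 = (v pr'.2).1 := by
        refine Prod.ext heq (hsh.2.trans hsh'.2.symm)
      have hm1 : ((v pr.2).1, pr.2) ∈ lC := by
        have : ((v pr.2).1, pr.2) = v pr.2 := Prod.ext rfl (hv2 pr.2).symm
        rw [this]
        exact hv1 pr.2
      have hm2 : ((v pr.2).1, pr'.2) ∈ lC := by
        have : ((v pr.2).1, pr'.2) = v pr'.2 := by
          rw [hfst]
          exact Prod.ext rfl (hv2 pr'.2).symm
        rw [this]
        exact hv1 pr'.2
      exact snduq hprQ hprQ' (fstuc hm1 hm2)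
  · -- snd coverage
    intro hE
    by_cases hEγ : hE = γ
    · rw [hEγ]
      exact List.mem_map.2 ⟨_, List.mem_cons_self, rfl⟩
    · obtain ⟨qr, hqr, hqr1⟩ := List.mem_map.1 (c2 hE (by simpa using hEγ))
      obtain ⟨pr, hpr, hpr2⟩ := List.mem_map.1 (p6 qr.2)
      have hprne : pr.1.1 ≠ σ := by
        intro hc
        rcases p1 pr hpr with ⟨hm, -⟩ | ⟨-, k, hl⟩
        · exact hm (hc ▸ hσ)
        · obtain ⟨jk, hjQ, hjC⟩ := hmatch k
          have hppair : pr = ((σ, [(k : BasilicaR.E)]), pr.2) := by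
            refine Prod.ext ?_ rfl
            rw [show pr.1 = (pr.1.1, pr.1.2) from rfl, hc, hl]
            rfl
          have hj : pr.2 = jk := by
            have hmem : ((σ, [(k : BasilicaR.E)]), pr.2) ∈ lQ := by
              rw [← hppair]; exact hpr
            exact fstuq hmem hjQ
          have hj' : qr.2 = jk := by rw [hpr2] at hj; exact hj
          have hqrpair : qr = ((γ, [(k : BasilicaR.E)]), jk) := snduc hqr hjC hj'
          have : qr.1 = (γ, [(k : BasilicaR.E)]) := congrArg Prod.fst hqrpair
          rw [hqr1] at this
          exact absurd (congrArg Prod.snd this) (by simp)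
      refine List.mem_map.2 ⟨(pr.1, (v pr.2).1.1), List.mem_cons_of_mem _
        (List.mem_map.2 ⟨pr, List.mem_filter.2 ⟨hpr, by simpa using hprne⟩, rfl⟩), ?_⟩
      show (v pr.2).1.1 = hE
      rw [hpr2, hvC qr hqr, hqr1]
  · -- equations
    rintro p hp s
    rcases List.mem_cons.1 hp with rfl | hp'
    · show (Q.trans C.symm) (pt BasilicaR bvι bvτ (σ, prepend BasilicaR [] s)) =
        pt BasilicaR bvι bvτ (γ, s)
      rw [prepend_nil]
      obtain ⟨j0, hj1, hj2⟩ := hmatch (s 0)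
      have e1 := p7 _ hj1 (fun n => s (n + 1))
      have e2 := c7 _ hj2 (fun n => s (n + 1))
      change Q (pt BasilicaR bvι bvτ (σ, prepend BasilicaR [s 0] fun n => s (n + 1))) =
        pt BasilicaR bvι bvτ (j0, fun n => s (n + 1)) at e1
      change C (pt BasilicaR bvι bvτ (γ, prepend BasilicaR [s 0] fun n => s (n + 1))) =
        pt BasilicaR bvι bvτ (j0, fun n => s (n + 1)) at e2
      rw [prepend_head_tail] at e1 e2
      rw [Homeomorph.trans_apply]
      exact (congrArg C.symm e1).trans ((congrArg C.symm e2).symm.trans (C.symm_apply_apply _))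
    · obtain ⟨pr, hprf, rfl⟩ := List.mem_map.1 hp'
      have hprQ : pr ∈ lQ := List.mem_of_mem_filter hprf
      have hprne : pr.1.1 ≠ σ := by simpa using List.of_mem_filter hprf
      have hsh := hvshape pr hprQ hprne
      show (Q.trans C.symm) (pt BasilicaR bvι bvτ (pr.1.1, prepend BasilicaR pr.1.2 s)) =
        pt BasilicaR bvι bvτ ((v pr.2).1.1, s)
      rw [Homeomorph.trans_apply, p7 pr hprQ s]
      have e2 := c7 (v pr.2) (hv1 pr.2) s
      rw [hsh.2, prepend_nil, hv2 pr.2] at e2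
      rw [← e2, Homeomorph.symm_apply_apply]


/-! ### the invariant along parallelism -/

lemma edgeInvS_paraStep {B : MDigraph} {c d : K0 B × K0 B} (h : ParaStep B c d) :
    ∃ Sstar, EdgeInvS B c Sstar ∧ EdgeInvS B d Sstar := by
  obtain ⟨a, b, a', b', ⟨x, ε, δ, hεδ, ha, ⟨y, φ, hφ, hyf, hb⟩, ⟨z, ψ, hψ, hzf, ha'⟩,
    ⟨w, χ, lw, hχ, hwf, hb'⟩⟩, hcase⟩ := h
  rcases hcase with ⟨hc, hd⟩ | ⟨hc, hd⟩
  · -- c = (a, b), d = (a', b') : both cross the ε-wall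
    refine ⟨x.f.symm '' cellSet ε, ⟨x, y, φ, ε, hφ, hyf, ?_, ?_, rfl⟩, ?_⟩
    · rw [hc]; exact ha
    · rw [hc]; exact hb
    · obtain ⟨lψ, hlψ⟩ := hψ
      have hεδ' : ε ∉ ({δ} : Finset (toG x.H).E) := by simpa using hεδ
      obtain ⟨pe, hpe, hpe1⟩ := List.mem_map.1 (hlψ.2.1 ε hεδ')
      have hpεz : ((ε, ([] : List BasilicaR.E)), pe.2) ∈ lψ := by
        have : pe = ((ε, ([] : List BasilicaR.E)), pe.2) := Prod.ext hpe1 rfl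
        rw [← this]
        exact hpe
      have hexp' : IsSimpleExpRearrAt (ψ.symm.trans χ) pe.2 :=
        contrExp ψ χ {δ} ε hεδ' pe.2 hlψ hχ hpεz
      have hwf' : w.f = z.f.trans (ψ.symm.trans χ) := by
        rw [hwf, hzf]
        exact Homeomorph.ext fun u => by
          simp [Homeomorph.trans_apply, Homeomorph.symm_apply_apply]
      have hcell : ψ.symm '' cellSet pe.2 = cellSet ε := by
        refine symm_image_cell ψ ε pe.2 ?_
        intro s
        have := hlψ.2.2.2.2.2.2 _ hpεz s
        rw [show ((ε, ([] : List BasilicaR.E)), pe.2).1.2 = ([] : List BasilicaR.E) from rfl,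
          prepend_nil] at this
        exact this
      refine ⟨z, w, ψ.symm.trans χ, pe.2, hexp', hwf', ?_, ?_, ?_⟩
      · rw [hd]; exact ha'
      · rw [hd]; exact hb'
      · rw [hzf, image_symm_trans, hcell]
  · -- c = (a, a'), d = (b, b') : both cross the δ-wall
    refine ⟨x.f.symm '' cellSet δ, ⟨x, z, ψ, δ, hψ, hzf, ?_, ?_, rfl⟩, ?_⟩
    · rw [hc]; exact ha
    · rw [hc]; exact ha'
    · obtain ⟨lφ, hlφ⟩ := hφ
      have hδε : δ ∉ ({ε} : Finset (toG x.H).E) := by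
        simp only [Finset.mem_singleton]
        exact fun hcon => hεδ hcon.symm
      obtain ⟨pe, hpe, hpe1⟩ := List.mem_map.1 (hlφ.2.1 δ hδε)
      have hpδy : ((δ, ([] : List BasilicaR.E)), pe.2) ∈ lφ := by
        have : pe = ((δ, ([] : List BasilicaR.E)), pe.2) := Prod.ext hpe1 rfl
        rw [← this]
        exact hpe
      have hχ' : ExpAtSetWitness χ (insert δ {ε}) lw := by
        have hpair : ({ε, δ} : Finset (toG x.H).E) = {δ, ε} := Finset.pair_comm ε δ
        rw [← hpair]
        exact hχ
      have hexp' : IsSimpleExpRearrAt (φ.symm.trans χ) pe.2 :=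
        contrExp φ χ {ε} δ hδε pe.2 hlφ hχ' hpδy
      have hwf' : w.f = y.f.trans (φ.symm.trans χ) := by
        rw [hwf, hyf]
        exact Homeomorph.ext fun u => by
          simp [Homeomorph.trans_apply, Homeomorph.symm_apply_apply]
      have hcell : φ.symm '' cellSet pe.2 = cellSet δ := by
        refine symm_image_cell φ δ pe.2 ?_
        intro s
        have := hlφ.2.2.2.2.2.2 _ hpδy s
        rw [show ((δ, ([] : List BasilicaR.E)), pe.2).1.2 = ([] : List BasilicaR.E) from rfl,
          prepend_nil] at this
        exact this
      refine ⟨y, w, φ.symm.trans χ, pe.2, hexp', hwf', ?_, ?_, ?_⟩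
      · rw [hd]; exact hb
      · rw [hd]; exact hb'
      · rw [hyf, image_symm_trans, hcell]

lemma wall_edgeInvS {B : MDigraph} {c0 d : K0 B × K0 B} (hW : d ∈ WallOf B c0)
    {S0 : Set (BLimit B)} (h0 : EdgeInvS B c0 S0) : EdgeInvS B d S0 := by
  have key : ∀ u v : K0 B × K0 B, Relation.EqvGen (ParaStep B) u v →
      (EdgeInvS B u S0 ↔ EdgeInvS B v S0) := by
    intro u v huv
    induction huv with
    | rel p q hpq =>
      obtain ⟨Sstar, hp, hq⟩ := edgeInvS_paraStep hpq
      constructor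
      · intro h
        rw [edgeInvS_unique h hp] at *
        exact hq
      · intro h
        rw [edgeInvS_unique h hq] at *
        exact hp
    | refl p => exact Iff.rfl
    | symm p q _ ih => exact ih.symm
    | trans p q r _ _ ih1 ih2 => exact ih1.trans ih2
  exact (key _ _ hW).1 h0

lemma edgeInvS_expAdj {B : MDigraph} {c : K0 B × K0 B} {S : Set (BLimit B)}
    (h : EdgeInvS B c S) : ExpAdj B c.1 c.2 := by
  obtain ⟨x, y, φ, ε, hexp, hyf, hc1, hc2, -⟩ := h
  exact ⟨x, y, φ, ε, hexp, hyf, hc1, hc2⟩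


/-! ### cell computations from witnesses -/

lemma witness_image_cell {G G' : MDigraph} {φ : BLimit G ≃ₜ BLimit G'} {S : Finset G.E}
    {l : List (Addr BasilicaR G × G'.E)} (hw : ExpAtSetWitness φ S l) {a : G.E} {b : G'.E}
    (hm : ((a, ([] : List BasilicaR.E)), b) ∈ l) : φ '' cellSet a = cellSet b := by
  refine image_cell φ a b fun s => ?_
  have h := hw.2.2.2.2.2.2 _ hm s
  rw [show ((a, ([] : List BasilicaR.E)), b).1.2 = ([] : List BasilicaR.E) from rfl,
    prepend_nil] at h
  exact h

lemma thirds_image {G G' : MDigraph} {φ : BLimit G ≃ₜ BLimit G'} {ε : G.E}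
    {l : List (Addr BasilicaR G × G'.E)} (hw : ExpAtSetWitness φ {ε} l)
    {t0 t1 t2 : G'.E} (h0 : ((ε, [bE 0]), t0) ∈ l) (h1 : ((ε, [bE 1]), t1) ∈ l)
    (h2 : ((ε, [bE 2]), t2) ∈ l) :
    φ '' cellSet ε = cellSet t0 ∪ cellSet t1 ∪ cellSet t2 := by
  rw [cellSet_eq_union ε, Set.image_union, Set.image_union]
  rw [image_subcell φ ε [bE 0] t0 (fun s => hw.2.2.2.2.2.2 _ h0 s),
    image_subcell φ ε [bE 1] t1 (fun s => hw.2.2.2.2.2.2 _ h1 s),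
    image_subcell φ ε [bE 2] t2 (fun s => hw.2.2.2.2.2.2 _ h2 s)]

lemma unions_absurd {G : MDigraph} (f : BLimit BasilicaBase ≃ₜ BLimit G)
    (a1 a2 a3 b1 b2 b3 j : G.E)
    (hc : f.symm '' (cellSet a1 ∪ cellSet a2 ∪ cellSet a3) =
          f.symm '' (cellSet b1 ∪ cellSet b2 ∪ cellSet b3))
    (hj : j = a1 ∨ j = a2 ∨ j = a3) (h1 : j ≠ b1) (h2 : j ≠ b2) (h3 : j ≠ b3) : False := by
  have hsets := (Set.image_eq_image f.symm.injective).1 hc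
  have hmem : pt BasilicaR bvι bvτ ((j, fun _ => bE 1) : Omega BasilicaR G) ∈
      cellSet b1 ∪ cellSet b2 ∪ cellSet b3 := by
    rw [← hsets]
    rcases hj with rfl | rfl | rfl
    · exact Set.mem_union_left _ (Set.mem_union_left _ (pt_const1_mem_cellSet _))
    · exact Set.mem_union_left _ (Set.mem_union_right _ (pt_const1_mem_cellSet _))
    · exact Set.mem_union_right _ (pt_const1_mem_cellSet _)
  simp only [Set.mem_union] at hmem
  rcases hmem with (h | h) | h
  · exact h1 (eq_of_pt_const1_mem h).symm
  · exact h2 (eq_of_pt_const1_mem h).symm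
  · exact h3 (eq_of_pt_const1_mem h).symm

lemma JEdge_ne {n : ℕ} {i j : ℕ} {hi : i < 2 * n + 10} {hj : j < 2 * n + 10} (h : i ≠ j) :
    (Fin.mk i hi : (toG (Jn n)).E) ≠ Fin.mk j hj :=
  fun hc => h (congrArg Fin.val hc)

end QSAux
/-- Non-empty quarter-spaces. Fix a vertex `[fₙ]` of the Basilica cube complex `K(G₀)`
whose range graph is `Jₙ`. Let `H₁`, `H₂` be the walls dual to the `1`-cubes from
`[∇_{x,y,z}∘fₙ]` to `[fₙ]` and from `[∇_{c,d,e}∘fₙ]` to `[fₙ]`, with positive half-spaces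
the sides of `[fₙ]`. Then the four vertices `[∇_{a,b,c}∘∇_{v,w,x}∘fₙ]`,
`[∇_{c,d,e}∘∇_{v,w,x}∘fₙ]`, `[∇_{a,b,c}∘∇_{x,y,z}∘fₙ]`, `[∇_{c,d,e}∘∇_{x,y,z}∘fₙ]` have
rank `2n+6` and lie respectively in `H₁⁺∩H₂⁺`, `H₁⁺∩H₂⁻`, `H₁⁻∩H₂⁺`, `H₁⁻∩H₂⁻`; since
`2n+6 ≤ 2n+9` all four quarter-spaces intersected with the sublevel set
`Y_n = K(G₀)_{2n+9}` are nonempty. -/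
theorem quarter_spaces_nonempty (n : ℕ)
    (f : BLimit BasilicaBase ≃ₜ BLimit (toG (Jn n))) (hf : BIsRearr f)
    -- the contraction `∇_{x,y,z}` (with its graph pair data)
    (Hxyz : SkG) (ψxyz : BLimit (toG (Jn n)) ≃ₜ BLimit (toG Hxyz))
    (εxyz : (toG Hxyz).E) (lxyz : List (Addr BasilicaR (toG Hxyz) × (toG (Jn n)).E))
    (hwxyz : ExpAtSetWitness ψxyz.symm {εxyz} lxyz)
    (hrxyz : ∀ k : Fin 3, ((εxyz, [(k : BasilicaR.E)]), ![JxE n, JyE n, JzE n] k) ∈ lxyz)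
    (hRxyz : BIsRearr (f.trans ψxyz))
    (aX bX cX dX eX : (toG Hxyz).E)
    (haX : ((aX, ([] : List BasilicaR.E)), JaE n) ∈ lxyz)
    (hbX : ((bX, ([] : List BasilicaR.E)), JbE n) ∈ lxyz)
    (hcX : ((cX, ([] : List BasilicaR.E)), JcE n) ∈ lxyz)
    (hdX : ((dX, ([] : List BasilicaR.E)), JdE n) ∈ lxyz)
    (heX : ((eX, ([] : List BasilicaR.E)), JeE n) ∈ lxyz)
    -- the contraction `∇_{v,w,x}`
    (Hvwx : SkG) (ψvwx : BLimit (toG (Jn n)) ≃ₜ BLimit (toG Hvwx))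
    (εvwx : (toG Hvwx).E) (lvwx : List (Addr BasilicaR (toG Hvwx) × (toG (Jn n)).E))
    (hwvwx : ExpAtSetWitness ψvwx.symm {εvwx} lvwx)
    (hrvwx : ∀ k : Fin 3, ((εvwx, [(k : BasilicaR.E)]), ![JvE n, JwE n, JxE n] k) ∈ lvwx)
    (hRvwx : BIsRearr (f.trans ψvwx))
    (aV bV cV dV eV : (toG Hvwx).E)
    (haV : ((aV, ([] : List BasilicaR.E)), JaE n) ∈ lvwx)
    (hbV : ((bV, ([] : List BasilicaR.E)), JbE n) ∈ lvwx)
    (hcV : ((cV, ([] : List BasilicaR.E)), JcE n) ∈ lvwx)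
    (hdV : ((dV, ([] : List BasilicaR.E)), JdE n) ∈ lvwx)
    (heV : ((eV, ([] : List BasilicaR.E)), JeE n) ∈ lvwx)
    -- the contraction `∇_{c,d,e}`
    (Hcde : SkG) (ψcde : BLimit (toG (Jn n)) ≃ₜ BLimit (toG Hcde))
    (hψcde : IsSimpleContrOf ψcde ![JcE n, JdE n, JeE n])
    (hRcde : BIsRearr (f.trans ψcde))
    -- the four composite contractions
    (Hq1 : SkG) (ψq1 : BLimit (toG Hvwx) ≃ₜ BLimit (toG Hq1))
    (hψq1 : IsSimpleContrOf ψq1 ![aV, bV, cV]) (hRq1 : BIsRearr ((f.trans ψvwx).trans ψq1))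
    (Hq2 : SkG) (ψq2 : BLimit (toG Hvwx) ≃ₜ BLimit (toG Hq2))
    (hψq2 : IsSimpleContrOf ψq2 ![cV, dV, eV]) (hRq2 : BIsRearr ((f.trans ψvwx).trans ψq2))
    (Hq3 : SkG) (ψq3 : BLimit (toG Hxyz) ≃ₜ BLimit (toG Hq3))
    (hψq3 : IsSimpleContrOf ψq3 ![aX, bX, cX]) (hRq3 : BIsRearr ((f.trans ψxyz).trans ψq3))
    (Hq4 : SkG) (ψq4 : BLimit (toG Hxyz) ≃ₜ BLimit (toG Hq4))
    (hψq4 : IsSimpleContrOf ψq4 ![cX, dX, eX]) (hRq4 : BIsRearr ((f.trans ψxyz).trans ψq4)) :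
    let mk := Quot.mk (RangeEquiv BasilicaBase)
    let x0 := mk ⟨Jn n, f, hf⟩
    let yxyz := mk ⟨Hxyz, f.trans ψxyz, hRxyz⟩
    let ycde := mk ⟨Hcde, f.trans ψcde, hRcde⟩
    let q1 := mk ⟨Hq1, (f.trans ψvwx).trans ψq1, hRq1⟩
    let q2 := mk ⟨Hq2, (f.trans ψvwx).trans ψq2, hRq2⟩
    let q3 := mk ⟨Hq3, (f.trans ψxyz).trans ψq3, hRq3⟩
    let q4 := mk ⟨Hq4, (f.trans ψxyz).trans ψq4, hRq4⟩
    let W1 := WallOf BasilicaBase (yxyz, x0)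
    let W2 := WallOf BasilicaBase (ycde, x0)
    (HasRank q1 (2 * n + 6) ∧ HasRank q2 (2 * n + 6) ∧
     HasRank q3 (2 * n + 6) ∧ HasRank q4 (2 * n + 6)) ∧
    (SideOf BasilicaBase W1 x0 q1 ∧ SideOf BasilicaBase W2 x0 q1) ∧
    (SideOf BasilicaBase W1 x0 q2 ∧ SideOf BasilicaBase W2 ycde q2) ∧
    (SideOf BasilicaBase W1 yxyz q3 ∧ SideOf BasilicaBase W2 x0 q3) ∧
    (SideOf BasilicaBase W1 yxyz q4 ∧ SideOf BasilicaBase W2 ycde q4) ∧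
    (∀ δ₁ δ₂ : Bool, ∃ z : K0 BasilicaBase,
      SideOf BasilicaBase W1 (if δ₁ then x0 else yxyz) z ∧
      SideOf BasilicaBase W2 (if δ₂ then x0 else ycde) z ∧
      ∃ r ≤ 2 * n + 9, HasRank z r) := by

  intro mk x0 yxyz ycde q1 q2 q3 q4 W1 W2
  -- destructure the contraction data
  obtain ⟨εcde, lcde, hwcde, hrcde⟩ := hψcde
  obtain ⟨εq1, lq1, hwq1, hrq1⟩ := hψq1
  obtain ⟨εq2, lq2, hwq2, hrq2⟩ := hψq2
  obtain ⟨εq3, lq3, hwq3, hrq3⟩ := hψq3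
  obtain ⟨εq4, lq4, hwq4, hrq4⟩ := hψq4
  -- convenient forms of the third-cell data
  have hx0' : ((εxyz, [bE 0]), JxE n) ∈ lxyz := hrxyz 0
  have hx1' : ((εxyz, [bE 1]), JyE n) ∈ lxyz := hrxyz 1
  have hx2' : ((εxyz, [bE 2]), JzE n) ∈ lxyz := hrxyz 2
  have hv0' : ((εvwx, [bE 0]), JvE n) ∈ lvwx := hrvwx 0
  have hv1' : ((εvwx, [bE 1]), JwE n) ∈ lvwx := hrvwx 1
  have hv2' : ((εvwx, [bE 2]), JxE n) ∈ lvwx := hrvwx 2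
  have hc0' : ((εcde, [bE 0]), JcE n) ∈ lcde := hrcde 0
  have hc1' : ((εcde, [bE 1]), JdE n) ∈ lcde := hrcde 1
  have hc2' : ((εcde, [bE 2]), JeE n) ∈ lcde := hrcde 2
  have hq10 : ((εq1, [bE 0]), aV) ∈ lq1 := hrq1 0
  have hq11 : ((εq1, [bE 1]), bV) ∈ lq1 := hrq1 1
  have hq12 : ((εq1, [bE 2]), cV) ∈ lq1 := hrq1 2
  have hq20 : ((εq2, [bE 0]), cV) ∈ lq2 := hrq2 0
  have hq21 : ((εq2, [bE 1]), dV) ∈ lq2 := hrq2 1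
  have hq22 : ((εq2, [bE 2]), eV) ∈ lq2 := hrq2 2
  have hq30 : ((εq3, [bE 0]), aX) ∈ lq3 := hrq3 0
  have hq31 : ((εq3, [bE 1]), bX) ∈ lq3 := hrq3 1
  have hq32 : ((εq3, [bE 2]), cX) ∈ lq3 := hrq3 2
  have hq40 : ((εq4, [bE 0]), cX) ∈ lq4 := hrq4 0
  have hq41 : ((εq4, [bE 1]), dX) ∈ lq4 := hrq4 1
  have hq42 : ((εq4, [bE 2]), eX) ∈ lq4 := hrq4 2
  -- cardinalities
  have cardJ : Fintype.card (toG (Jn n)).E = 2 * n + 10 := Fintype.card_fin _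
  have cardVWX : Fintype.card (toG Hvwx).E = 2 * n + 8 := by
    have := card_of_expWitness hwvwx
    omega
  have cardXYZ : Fintype.card (toG Hxyz).E = 2 * n + 8 := by
    have := card_of_expWitness hwxyz
    omega
  have cardCDE : Fintype.card (toG Hcde).E = 2 * n + 8 := by
    have := card_of_expWitness hwcde
    omega
  have cardQ1 : Fintype.card (toG Hq1).E = 2 * n + 6 := by
    have := card_of_expWitness hwq1
    omega
  have cardQ2 : Fintype.card (toG Hq2).E = 2 * n + 6 := by
    have := card_of_expWitness hwq2
    omega
  have cardQ3 : Fintype.card (toG Hq3).E = 2 * n + 6 := by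
    have := card_of_expWitness hwq3
    omega
  have cardQ4 : Fintype.card (toG Hq4).E = 2 * n + 6 := by
    have := card_of_expWitness hwq4
    omega
  -- the intermediate vertex classes
  set yvwx : K0 BasilicaBase :=
    Quot.mk (RangeEquiv BasilicaBase) ⟨Hvwx, f.trans ψvwx, hRvwx⟩ with hyvwxdef
  -- ranks
  have hrkx0 : HasRank x0 (2 * n + 10) := ⟨⟨Jn n, f, hf⟩, rfl, cardJ⟩
  have hrkvwx : HasRank yvwx (2 * n + 8) := ⟨⟨Hvwx, f.trans ψvwx, hRvwx⟩, rfl, cardVWX⟩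
  have hrkxyz : HasRank yxyz (2 * n + 8) := ⟨⟨Hxyz, f.trans ψxyz, hRxyz⟩, rfl, cardXYZ⟩
  have hrkcde : HasRank ycde (2 * n + 8) := ⟨⟨Hcde, f.trans ψcde, hRcde⟩, rfl, cardCDE⟩
  have hrkq1 : HasRank q1 (2 * n + 6) :=
    ⟨⟨Hq1, (f.trans ψvwx).trans ψq1, hRq1⟩, rfl, cardQ1⟩
  have hrkq2 : HasRank q2 (2 * n + 6) :=
    ⟨⟨Hq2, (f.trans ψvwx).trans ψq2, hRq2⟩, rfl, cardQ2⟩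
  have hrkq3 : HasRank q3 (2 * n + 6) :=
    ⟨⟨Hq3, (f.trans ψxyz).trans ψq3, hRq3⟩, rfl, cardQ3⟩
  have hrkq4 : HasRank q4 (2 * n + 6) :=
    ⟨⟨Hq4, (f.trans ψxyz).trans ψq4, hRq4⟩, rfl, cardQ4⟩
  -- the canonical edge invariants
  have hIE3 : EdgeInvS BasilicaBase (yxyz, x0) ((f.trans ψxyz).symm '' cellSet εxyz) := by
    refine ⟨⟨Hxyz, f.trans ψxyz, hRxyz⟩, ⟨Jn n, f, hf⟩, ψxyz.symm, εxyz, ⟨lxyz, hwxyz⟩, ?_,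
      rfl, rfl, rfl⟩
    exact Homeomorph.ext fun u => by simp [Homeomorph.trans_apply]
  have hIE0 : EdgeInvS BasilicaBase (yvwx, x0) ((f.trans ψvwx).symm '' cellSet εvwx) := by
    refine ⟨⟨Hvwx, f.trans ψvwx, hRvwx⟩, ⟨Jn n, f, hf⟩, ψvwx.symm, εvwx, ⟨lvwx, hwvwx⟩, ?_,
      rfl, rfl, rfl⟩
    exact Homeomorph.ext fun u => by simp [Homeomorph.trans_apply]
  have hIE6 : EdgeInvS BasilicaBase (ycde, x0) ((f.trans ψcde).symm '' cellSet εcde) := by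
    refine ⟨⟨Hcde, f.trans ψcde, hRcde⟩, ⟨Jn n, f, hf⟩, ψcde.symm, εcde, ⟨lcde, hwcde⟩, ?_,
      rfl, rfl, rfl⟩
    exact Homeomorph.ext fun u => by simp [Homeomorph.trans_apply]
  have hIE1 : EdgeInvS BasilicaBase (q1, yvwx)
      (((f.trans ψvwx).trans ψq1).symm '' cellSet εq1) := by
    refine ⟨⟨Hq1, (f.trans ψvwx).trans ψq1, hRq1⟩, ⟨Hvwx, f.trans ψvwx, hRvwx⟩, ψq1.symm,
      εq1, ⟨lq1, hwq1⟩, ?_, rfl, rfl, rfl⟩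
    exact Homeomorph.ext fun u => by simp [Homeomorph.trans_apply]
  have hIE2 : EdgeInvS BasilicaBase (q2, yvwx)
      (((f.trans ψvwx).trans ψq2).symm '' cellSet εq2) := by
    refine ⟨⟨Hq2, (f.trans ψvwx).trans ψq2, hRq2⟩, ⟨Hvwx, f.trans ψvwx, hRvwx⟩, ψq2.symm,
      εq2, ⟨lq2, hwq2⟩, ?_, rfl, rfl, rfl⟩
    exact Homeomorph.ext fun u => by simp [Homeomorph.trans_apply]
  have hIE4 : EdgeInvS BasilicaBase (q3, yxyz)
      (((f.trans ψxyz).trans ψq3).symm '' cellSet εq3) := by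
    refine ⟨⟨Hq3, (f.trans ψxyz).trans ψq3, hRq3⟩, ⟨Hxyz, f.trans ψxyz, hRxyz⟩, ψq3.symm,
      εq3, ⟨lq3, hwq3⟩, ?_, rfl, rfl, rfl⟩
    exact Homeomorph.ext fun u => by simp [Homeomorph.trans_apply]
  have hIE5 : EdgeInvS BasilicaBase (q4, yxyz)
      (((f.trans ψxyz).trans ψq4).symm '' cellSet εq4) := by
    refine ⟨⟨Hq4, (f.trans ψxyz).trans ψq4, hRq4⟩, ⟨Hxyz, f.trans ψxyz, hRxyz⟩, ψq4.symm,
      εq4, ⟨lq4, hwq4⟩, ?_, rfl, rfl, rfl⟩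
    exact Homeomorph.ext fun u => by simp [Homeomorph.trans_apply]
  -- the composite edges from `ycde` to `q2` and `q4`
  have hcVne : cV ≠ εvwx := by
    rcases hwvwx.1 _ hcV with ⟨hm, -⟩ | ⟨-, k, hl⟩
    · simpa using hm
    · exact absurd hl (by simp)
  have hdVne : dV ≠ εvwx := by
    rcases hwvwx.1 _ hdV with ⟨hm, -⟩ | ⟨-, k, hl⟩
    · simpa using hm
    · exact absurd hl (by simp)
  have heVne : eV ≠ εvwx := by
    rcases hwvwx.1 _ heV with ⟨hm, -⟩ | ⟨-, k, hl⟩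
    · simpa using hm
    · exact absurd hl (by simp)
  have hcXne : cX ≠ εxyz := by
    rcases hwxyz.1 _ hcX with ⟨hm, -⟩ | ⟨-, k, hl⟩
    · simpa using hm
    · exact absurd hl (by simp)
  have hdXne : dX ≠ εxyz := by
    rcases hwxyz.1 _ hdX with ⟨hm, -⟩ | ⟨-, k, hl⟩
    · simpa using hm
    · exact absurd hl (by simp)
  have heXne : eX ≠ εxyz := by
    rcases hwxyz.1 _ heX with ⟨hm, -⟩ | ⟨-, k, hl⟩
    · simpa using hm
    · exact absurd hl (by simp)
  -- find the edge of `Hq2` sitting over `εvwx`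
  have hfind2 : ∃ es : (toG Hq2).E, es ≠ εq2 ∧
      ((es, ([] : List BasilicaR.E)), εvwx) ∈ lq2 := by
    obtain ⟨pr2, hpr2m, hpr2s⟩ := List.mem_map.1 (hwq2.2.2.2.2.2.1 εvwx)
    rcases hwq2.1 pr2 hpr2m with ⟨hm, hl⟩ | ⟨hm, k, hl⟩
    · refine ⟨pr2.1.1, by simpa using hm, ?_⟩
      have : pr2 = ((pr2.1.1, ([] : List BasilicaR.E)), εvwx) :=
        Prod.ext (Prod.ext rfl hl) hpr2s
      rw [← this]
      exact hpr2m
    · exfalso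
      have hm' : pr2.1.1 = εq2 := by simpa using hm
      have hpair : pr2.1 = (εq2, [(k : BasilicaR.E)]) := Prod.ext hm' hl
      rcases fin3_cases k with rfl | rfl | rfl
      · have heq0 := mem_eq_of_map_nodup hwq2.2.2.2.1 hpr2m hq20 (by exact hpair)
        have hsnd0 : pr2.2 = cV := congrArg Prod.snd heq0
        exact hcVne (by rw [← hsnd0]; exact hpr2s)
      · have heq1 := mem_eq_of_map_nodup hwq2.2.2.2.1 hpr2m hq21 (by exact hpair)
        have hsnd1 : pr2.2 = dV := congrArg Prod.snd heq1
        exact hdVne (by rw [← hsnd1]; exact hpr2s)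
      · have heq2 := mem_eq_of_map_nodup hwq2.2.2.2.1 hpr2m hq22 (by exact hpair)
        have hsnd2 : pr2.2 = eV := congrArg Prod.snd heq2
        exact heVne (by rw [← hsnd2]; exact hpr2s)
  obtain ⟨e2s, he2sne, hpe2⟩ := hfind2
  have hfind4 : ∃ es : (toG Hq4).E, es ≠ εq4 ∧
      ((es, ([] : List BasilicaR.E)), εxyz) ∈ lq4 := by
    obtain ⟨pr4, hpr4m, hpr4s⟩ := List.mem_map.1 (hwq4.2.2.2.2.2.1 εxyz)
    rcases hwq4.1 pr4 hpr4m with ⟨hm, hl⟩ | ⟨hm, k, hl⟩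
    · refine ⟨pr4.1.1, by simpa using hm, ?_⟩
      have : pr4 = ((pr4.1.1, ([] : List BasilicaR.E)), εxyz) :=
        Prod.ext (Prod.ext rfl hl) hpr4s
      rw [← this]
      exact hpr4m
    · exfalso
      have hm' : pr4.1.1 = εq4 := by simpa using hm
      have hpair : pr4.1 = (εq4, [(k : BasilicaR.E)]) := Prod.ext hm' hl
      rcases fin3_cases k with rfl | rfl | rfl
      · have heq0 := mem_eq_of_map_nodup hwq4.2.2.2.1 hpr4m hq40 (by exact hpair)
        have hsnd0 : pr4.2 = cX := congrArg Prod.snd heq0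
        exact hcXne (by rw [← hsnd0]; exact hpr4s)
      · have heq1 := mem_eq_of_map_nodup hwq4.2.2.2.1 hpr4m hq41 (by exact hpair)
        have hsnd1 : pr4.2 = dX := congrArg Prod.snd heq1
        exact hdXne (by rw [← hsnd1]; exact hpr4s)
      · have heq2 := mem_eq_of_map_nodup hwq4.2.2.2.1 hpr4m hq42 (by exact hpair)
        have hsnd2 : pr4.2 = eX := congrArg Prod.snd heq2
        exact heXne (by rw [← hsnd2]; exact hpr4s)
  obtain ⟨e4s, he4sne, hpe4⟩ := hfind4
  -- compose the witnesses
  obtain ⟨lQ2, hlQ2, htrk2a, htrk2b⟩ := compExp hwq2 hwvwx e2s hpe2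
  obtain ⟨lQ4, hlQ4, htrk4a, htrk4b⟩ := compExp hwq4 hwxyz e4s hpe4
  have hmatch2 : ∀ k : Fin 3, ∃ j : (toG (Jn n)).E,
      ((εq2, [(k : BasilicaR.E)]), j) ∈ lQ2 ∧ ((εcde, [(k : BasilicaR.E)]), j) ∈ lcde := by
    intro k
    rcases fin3_cases k with rfl | rfl | rfl
    · exact ⟨JcE n, htrk2a _ hq20 hcVne _ hcV, hc0'⟩
    · exact ⟨JdE n, htrk2a _ hq21 hdVne _ hdV, hc1'⟩
    · exact ⟨JeE n, htrk2a _ hq22 heVne _ heV, hc2'⟩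
  have hmatch4 : ∀ k : Fin 3, ∃ j : (toG (Jn n)).E,
      ((εq4, [(k : BasilicaR.E)]), j) ∈ lQ4 ∧ ((εcde, [(k : BasilicaR.E)]), j) ∈ lcde := by
    intro k
    rcases fin3_cases k with rfl | rfl | rfl
    · exact ⟨JcE n, htrk4a _ hq40 hcXne _ hcX, hc0'⟩
    · exact ⟨JdE n, htrk4a _ hq41 hdXne _ hdX, hc1'⟩
    · exact ⟨JeE n, htrk4a _ hq42 heXne _ heX, hc2'⟩
  obtain ⟨l7, hl7⟩ := compContr hlQ2 hwcde εq2 (Finset.mem_insert_self _ _) hmatch2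
  obtain ⟨l8, hl8⟩ := compContr hlQ4 hwcde εq4 (Finset.mem_insert_self _ _) hmatch4
  have herase2 : (insert εq2 ({e2s} : Finset (toG Hq2).E)).erase εq2 = {e2s} :=
    Finset.erase_insert (by simpa using he2sne.symm)
  have herase4 : (insert εq4 ({e4s} : Finset (toG Hq4).E)).erase εq4 = {e4s} :=
    Finset.erase_insert (by simpa using he4sne.symm)
  rw [herase2] at hl7
  rw [herase4] at hl8
  have hIE7 : EdgeInvS BasilicaBase (q2, ycde)
      (((f.trans ψvwx).trans ψq2).symm '' cellSet e2s) := by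
    refine ⟨⟨Hq2, (f.trans ψvwx).trans ψq2, hRq2⟩, ⟨Hcde, f.trans ψcde, hRcde⟩,
      (ψq2.symm.trans ψvwx.symm).trans ψcde.symm.symm, e2s, ⟨l7, hl7⟩, ?_, rfl, rfl, rfl⟩
    exact Homeomorph.ext fun u => by simp [Homeomorph.trans_apply]
  have hIE8 : EdgeInvS BasilicaBase (q4, ycde)
      (((f.trans ψxyz).trans ψq4).symm '' cellSet e4s) := by
    refine ⟨⟨Hq4, (f.trans ψxyz).trans ψq4, hRq4⟩, ⟨Hcde, f.trans ψcde, hRcde⟩,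
      (ψq4.symm.trans ψxyz.symm).trans ψcde.symm.symm, e4s, ⟨l8, hl8⟩, ?_, rfl, rfl, rfl⟩
    exact Homeomorph.ext fun u => by simp [Homeomorph.trans_apply]
  -- union forms of the invariants
  have hSXYZ : (f.trans ψxyz).symm '' cellSet εxyz =
      f.symm '' (cellSet (JxE n) ∪ cellSet (JyE n) ∪ cellSet (JzE n)) := by
    rw [image_symm_trans, thirds_image hwxyz hx0' hx1' hx2']
  have hSVWX : (f.trans ψvwx).symm '' cellSet εvwx =
      f.symm '' (cellSet (JvE n) ∪ cellSet (JwE n) ∪ cellSet (JxE n)) := by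
    rw [image_symm_trans, thirds_image hwvwx hv0' hv1' hv2']
  have hSCDE : (f.trans ψcde).symm '' cellSet εcde =
      f.symm '' (cellSet (JcE n) ∪ cellSet (JdE n) ∪ cellSet (JeE n)) := by
    rw [image_symm_trans, thirds_image hwcde hc0' hc1' hc2']
  have hS1 : ((f.trans ψvwx).trans ψq1).symm '' cellSet εq1 =
      f.symm '' (cellSet (JaE n) ∪ cellSet (JbE n) ∪ cellSet (JcE n)) := by
    have hstep1 : ψq1.symm '' cellSet εq1 =
        cellSet aV ∪ cellSet bV ∪ cellSet cV := thirds_image hwq1 hq10 hq11 hq12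
    have hstep2 : ψvwx.symm '' (cellSet aV ∪ cellSet bV ∪ cellSet cV) =
        cellSet (JaE n) ∪ cellSet (JbE n) ∪ cellSet (JcE n) := by
      rw [Set.image_union, Set.image_union, witness_image_cell hwvwx haV,
        witness_image_cell hwvwx hbV, witness_image_cell hwvwx hcV]
    rw [image_symm_trans, hstep1, image_symm_trans, hstep2]

  have hS2 : ((f.trans ψvwx).trans ψq2).symm '' cellSet εq2 =
      f.symm '' (cellSet (JcE n) ∪ cellSet (JdE n) ∪ cellSet (JeE n)) := by
    have hstep1 : ψq2.symm '' cellSet εq2 =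
        cellSet cV ∪ cellSet dV ∪ cellSet eV := thirds_image hwq2 hq20 hq21 hq22
    have hstep2 : ψvwx.symm '' (cellSet cV ∪ cellSet dV ∪ cellSet eV) =
        cellSet (JcE n) ∪ cellSet (JdE n) ∪ cellSet (JeE n) := by
      rw [Set.image_union, Set.image_union, witness_image_cell hwvwx hcV,
        witness_image_cell hwvwx hdV, witness_image_cell hwvwx heV]
    rw [image_symm_trans, hstep1, image_symm_trans, hstep2]

  have hS3 : ((f.trans ψxyz).trans ψq3).symm '' cellSet εq3 =
      f.symm '' (cellSet (JaE n) ∪ cellSet (JbE n) ∪ cellSet (JcE n)) := by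
    have hstep1 : ψq3.symm '' cellSet εq3 =
        cellSet aX ∪ cellSet bX ∪ cellSet cX := thirds_image hwq3 hq30 hq31 hq32
    have hstep2 : ψxyz.symm '' (cellSet aX ∪ cellSet bX ∪ cellSet cX) =
        cellSet (JaE n) ∪ cellSet (JbE n) ∪ cellSet (JcE n) := by
      rw [Set.image_union, Set.image_union, witness_image_cell hwxyz haX,
        witness_image_cell hwxyz hbX, witness_image_cell hwxyz hcX]
    rw [image_symm_trans, hstep1, image_symm_trans, hstep2]

  have hS4 : ((f.trans ψxyz).trans ψq4).symm '' cellSet εq4 =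
      f.symm '' (cellSet (JcE n) ∪ cellSet (JdE n) ∪ cellSet (JeE n)) := by
    have hstep1 : ψq4.symm '' cellSet εq4 =
        cellSet cX ∪ cellSet dX ∪ cellSet eX := thirds_image hwq4 hq40 hq41 hq42
    have hstep2 : ψxyz.symm '' (cellSet cX ∪ cellSet dX ∪ cellSet eX) =
        cellSet (JcE n) ∪ cellSet (JdE n) ∪ cellSet (JeE n) := by
      rw [Set.image_union, Set.image_union, witness_image_cell hwxyz hcX,
        witness_image_cell hwxyz hdX, witness_image_cell hwxyz heX]
    rw [image_symm_trans, hstep1, image_symm_trans, hstep2]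

  have hS7 : ((f.trans ψvwx).trans ψq2).symm '' cellSet e2s =
      f.symm '' (cellSet (JvE n) ∪ cellSet (JwE n) ∪ cellSet (JxE n)) := by
    rw [image_symm_trans, witness_image_cell hwq2 hpe2, image_symm_trans,
      thirds_image hwvwx hv0' hv1' hv2']
  have hS8 : ((f.trans ψxyz).trans ψq4).symm '' cellSet e4s =
      f.symm '' (cellSet (JxE n) ∪ cellSet (JyE n) ∪ cellSet (JzE n)) := by
    rw [image_symm_trans, witness_image_cell hwq4 hpe4, image_symm_trans,
      thirds_image hwxyz hx0' hx1' hx2']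
  -- non-membership helpers
  have hnotW : ∀ (c0 : K0 BasilicaBase × K0 BasilicaBase) (S0 : Set (BLimit BasilicaBase)),
      EdgeInvS BasilicaBase c0 S0 → ∀ (p q : K0 BasilicaBase) (Sd : Set (BLimit BasilicaBase)),
      EdgeInvS BasilicaBase (p, q) Sd → S0 ≠ Sd → (p, q) ∉ WallOf BasilicaBase c0 := by
    intro c0 S0 h0 p q Sd hd hne hmem
    exact hne (edgeInvS_unique (wall_edgeInvS hmem h0) hd)
  have hnotWrank : ∀ (c0 : K0 BasilicaBase × K0 BasilicaBase) (S0 : Set (BLimit BasilicaBase)),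
      EdgeInvS BasilicaBase c0 S0 → ∀ (p q : K0 BasilicaBase) (rp rq : ℕ),
      HasRank p rp → HasRank q rq → rq ≠ rp + 2 → (p, q) ∉ WallOf BasilicaBase c0 := by
    intro c0 S0 h0 p q rp rq hp hq hne hmem
    have hadj := edgeInvS_expAdj (wall_edgeInvS hmem h0)
    exact hne (hasRank_unique (expAdj_rank hadj hp) hq).symm
  -- edge-label distinctness via `unions_absurd`
  have hne_xyz_vwx : (f.trans ψxyz).symm '' cellSet εxyz ≠
      (f.trans ψvwx).symm '' cellSet εvwx := by
    intro hc
    rw [hSXYZ, hSVWX] at hc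
    exact unions_absurd f _ _ _ _ _ _ (JyE n) hc (Or.inr (Or.inl rfl))
      (JEdge_ne (by omega)) (JEdge_ne (by omega)) (JEdge_ne (by omega))
  have hne_xyz_abc1 : (f.trans ψxyz).symm '' cellSet εxyz ≠
      ((f.trans ψvwx).trans ψq1).symm '' cellSet εq1 := by
    intro hc
    rw [hSXYZ, hS1] at hc
    exact unions_absurd f _ _ _ _ _ _ (JyE n) hc (Or.inr (Or.inl rfl))
      (JEdge_ne (by omega)) (JEdge_ne (by omega)) (JEdge_ne (by omega))
  have hne_xyz_cde2 : (f.trans ψxyz).symm '' cellSet εxyz ≠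
      ((f.trans ψvwx).trans ψq2).symm '' cellSet εq2 := by
    intro hc
    rw [hSXYZ, hS2] at hc
    exact unions_absurd f _ _ _ _ _ _ (JyE n) hc (Or.inr (Or.inl rfl))
      (JEdge_ne (by omega)) (JEdge_ne (by omega)) (JEdge_ne (by omega))
  have hne_xyz_abc3 : (f.trans ψxyz).symm '' cellSet εxyz ≠
      ((f.trans ψxyz).trans ψq3).symm '' cellSet εq3 := by
    intro hc
    rw [hSXYZ, hS3] at hc
    exact unions_absurd f _ _ _ _ _ _ (JyE n) hc (Or.inr (Or.inl rfl))
      (JEdge_ne (by omega)) (JEdge_ne (by omega)) (JEdge_ne (by omega))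
  have hne_xyz_cde4 : (f.trans ψxyz).symm '' cellSet εxyz ≠
      ((f.trans ψxyz).trans ψq4).symm '' cellSet εq4 := by
    intro hc
    rw [hSXYZ, hS4] at hc
    exact unions_absurd f _ _ _ _ _ _ (JyE n) hc (Or.inr (Or.inl rfl))
      (JEdge_ne (by omega)) (JEdge_ne (by omega)) (JEdge_ne (by omega))
  have hne_cde_vwx : (f.trans ψcde).symm '' cellSet εcde ≠
      (f.trans ψvwx).symm '' cellSet εvwx := by
    intro hc
    rw [hSCDE, hSVWX] at hc
    exact unions_absurd f _ _ _ _ _ _ (JdE n) hc (Or.inr (Or.inl rfl))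
      (JEdge_ne (by omega)) (JEdge_ne (by omega)) (JEdge_ne (by omega))
  have hne_cde_abc1 : (f.trans ψcde).symm '' cellSet εcde ≠
      ((f.trans ψvwx).trans ψq1).symm '' cellSet εq1 := by
    intro hc
    rw [hSCDE, hS1] at hc
    exact unions_absurd f _ _ _ _ _ _ (JdE n) hc (Or.inr (Or.inl rfl))
      (JEdge_ne (by omega)) (JEdge_ne (by omega)) (JEdge_ne (by omega))
  have hne_cde_xyz : (f.trans ψcde).symm '' cellSet εcde ≠
      (f.trans ψxyz).symm '' cellSet εxyz := by
    intro hc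
    rw [hSCDE, hSXYZ] at hc
    exact unions_absurd f _ _ _ _ _ _ (JdE n) hc (Or.inr (Or.inl rfl))
      (JEdge_ne (by omega)) (JEdge_ne (by omega)) (JEdge_ne (by omega))
  have hne_cde_abc3 : (f.trans ψcde).symm '' cellSet εcde ≠
      ((f.trans ψxyz).trans ψq3).symm '' cellSet εq3 := by
    intro hc
    rw [hSCDE, hS3] at hc
    exact unions_absurd f _ _ _ _ _ _ (JdE n) hc (Or.inr (Or.inl rfl))
      (JEdge_ne (by omega)) (JEdge_ne (by omega)) (JEdge_ne (by omega))
  have hne_cde_vwx7 : (f.trans ψcde).symm '' cellSet εcde ≠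
      ((f.trans ψvwx).trans ψq2).symm '' cellSet e2s := by
    intro hc
    rw [hSCDE, hS7] at hc
    exact unions_absurd f _ _ _ _ _ _ (JdE n) hc (Or.inr (Or.inl rfl))
      (JEdge_ne (by omega)) (JEdge_ne (by omega)) (JEdge_ne (by omega))
  have hne_cde_xyz8 : (f.trans ψcde).symm '' cellSet εcde ≠
      ((f.trans ψxyz).trans ψq4).symm '' cellSet e4s := by
    intro hc
    rw [hSCDE, hS8] at hc
    exact unions_absurd f _ _ _ _ _ _ (JdE n) hc (Or.inr (Or.inl rfl))
      (JEdge_ne (by omega)) (JEdge_ne (by omega)) (JEdge_ne (by omega))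
  -- the path steps
  have step1W1 : AdjOff BasilicaBase W1 x0 yvwx := by
    refine ⟨Or.inr (edgeInvS_expAdj hIE0), ?_, ?_⟩
    · exact hnotWrank _ _ hIE3 x0 yvwx _ _ hrkx0 hrkvwx (by omega)
    · exact hnotW _ _ hIE3 yvwx x0 _ hIE0 hne_xyz_vwx
  have step1W2 : AdjOff BasilicaBase W2 x0 yvwx := by
    refine ⟨Or.inr (edgeInvS_expAdj hIE0), ?_, ?_⟩
    · exact hnotWrank _ _ hIE6 x0 yvwx _ _ hrkx0 hrkvwx (by omega)
    · exact hnotW _ _ hIE6 yvwx x0 _ hIE0 hne_cde_vwx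
  have step2W1 : AdjOff BasilicaBase W1 yvwx q1 := by
    refine ⟨Or.inr (edgeInvS_expAdj hIE1), ?_, ?_⟩
    · exact hnotWrank _ _ hIE3 yvwx q1 _ _ hrkvwx hrkq1 (by omega)
    · exact hnotW _ _ hIE3 q1 yvwx _ hIE1 hne_xyz_abc1
  have step2W2 : AdjOff BasilicaBase W2 yvwx q1 := by
    refine ⟨Or.inr (edgeInvS_expAdj hIE1), ?_, ?_⟩
    · exact hnotWrank _ _ hIE6 yvwx q1 _ _ hrkvwx hrkq1 (by omega)
    · exact hnotW _ _ hIE6 q1 yvwx _ hIE1 hne_cde_abc1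
  have step3W1 : AdjOff BasilicaBase W1 yvwx q2 := by
    refine ⟨Or.inr (edgeInvS_expAdj hIE2), ?_, ?_⟩
    · exact hnotWrank _ _ hIE3 yvwx q2 _ _ hrkvwx hrkq2 (by omega)
    · exact hnotW _ _ hIE3 q2 yvwx _ hIE2 hne_xyz_cde2
  have step4W2 : AdjOff BasilicaBase W2 ycde q2 := by
    refine ⟨Or.inr (edgeInvS_expAdj hIE7), ?_, ?_⟩
    · exact hnotWrank _ _ hIE6 ycde q2 _ _ hrkcde hrkq2 (by omega)
    · exact hnotW _ _ hIE6 q2 ycde _ hIE7 hne_cde_vwx7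
  have step5W1 : AdjOff BasilicaBase W1 yxyz q3 := by
    refine ⟨Or.inr (edgeInvS_expAdj hIE4), ?_, ?_⟩
    · exact hnotWrank _ _ hIE3 yxyz q3 _ _ hrkxyz hrkq3 (by omega)
    · exact hnotW _ _ hIE3 q3 yxyz _ hIE4 hne_xyz_abc3
  have step6W2 : AdjOff BasilicaBase W2 x0 yxyz := by
    refine ⟨Or.inr (edgeInvS_expAdj hIE3), ?_, ?_⟩
    · exact hnotWrank _ _ hIE6 x0 yxyz _ _ hrkx0 hrkxyz (by omega)
    · exact hnotW _ _ hIE6 yxyz x0 _ hIE3 hne_cde_xyz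
  have step7W2 : AdjOff BasilicaBase W2 yxyz q3 := by
    refine ⟨Or.inr (edgeInvS_expAdj hIE4), ?_, ?_⟩
    · exact hnotWrank _ _ hIE6 yxyz q3 _ _ hrkxyz hrkq3 (by omega)
    · exact hnotW _ _ hIE6 q3 yxyz _ hIE4 hne_cde_abc3
  have step8W1 : AdjOff BasilicaBase W1 yxyz q4 := by
    refine ⟨Or.inr (edgeInvS_expAdj hIE5), ?_, ?_⟩
    · exact hnotWrank _ _ hIE3 yxyz q4 _ _ hrkxyz hrkq4 (by omega)
    · exact hnotW _ _ hIE3 q4 yxyz _ hIE5 hne_xyz_cde4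
  have step9W2 : AdjOff BasilicaBase W2 ycde q4 := by
    refine ⟨Or.inr (edgeInvS_expAdj hIE8), ?_, ?_⟩
    · exact hnotWrank _ _ hIE6 ycde q4 _ _ hrkcde hrkq4 (by omega)
    · exact hnotW _ _ hIE6 q4 ycde _ hIE8 hne_cde_xyz8
  -- the sides
  have side1W1 : SideOf BasilicaBase W1 x0 q1 :=
    (Relation.ReflTransGen.single step1W1).tail step2W1
  have side1W2 : SideOf BasilicaBase W2 x0 q1 :=
    (Relation.ReflTransGen.single step1W2).tail step2W2
  have side2W1 : SideOf BasilicaBase W1 x0 q2 :=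
    (Relation.ReflTransGen.single step1W1).tail step3W1
  have side2W2 : SideOf BasilicaBase W2 ycde q2 := Relation.ReflTransGen.single step4W2
  have side3W1 : SideOf BasilicaBase W1 yxyz q3 := Relation.ReflTransGen.single step5W1
  have side3W2 : SideOf BasilicaBase W2 x0 q3 :=
    (Relation.ReflTransGen.single step6W2).tail step7W2
  have side4W1 : SideOf BasilicaBase W1 yxyz q4 := Relation.ReflTransGen.single step8W1
  have side4W2 : SideOf BasilicaBase W2 ycde q4 := Relation.ReflTransGen.single step9W2
  refine ⟨⟨hrkq1, hrkq2, hrkq3, hrkq4⟩, ⟨side1W1, side1W2⟩, ⟨side2W1, side2W2⟩,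
    ⟨side3W1, side3W2⟩, ⟨side4W1, side4W2⟩, ?_⟩
  intro δ1 δ2
  cases δ1 <;> cases δ2
  · exact ⟨q4, side4W1, side4W2, 2 * n + 6, by omega, hrkq4⟩
  · exact ⟨q3, side3W1, side3W2, 2 * n + 6, by omega, hrkq3⟩
  · exact ⟨q2, side2W1, side2W2, 2 * n + 6, by omega, hrkq2⟩
  · exact ⟨q1, side1W1, side1W2, 2 * n + 6, by omega, hrkq1⟩
end
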